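/- arXiv:1002.3188 — 4 statements merged into one kernel-verified Lean document; each statement's English description precedes it below -/
import Mathlib

section
/- Let K be a real symmetric positive semidefinite n×n matrix and let G be a real m×n matrix. Then det( I_m + G K Gᵀ ) ≤ det( I_m + tr(K) · G Gᵀ ). -/
open Matrix Finset

section aux

variable {k : ℕ}

open scoped MatrixOrder

lemma diag_const_eq {t : ℝ} : Matrix.diagonal (fun _ : Fin k => t) = t • 1 := by
  ext i j
  by_cases h : i = j <;> simp [Matrix.diagonal_apply, Matrix.one_apply, h]

lemma spectral_real {A : Matrix (Fin k) (Fin k) ℝ} (hA : A.IsHermitian) :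
    A = hA.eigenvectorUnitary.1 * Matrix.diagonal hA.eigenvalues *
      (star hA.eigenvectorUnitary.1) := by
  have := hA.spectral_theorem
  simpa using this

lemma trace_eq_sum_eig {A : Matrix (Fin k) (Fin k) ℝ} (hA : A.IsHermitian) :
    A.trace = ∑ i, hA.eigenvalues i := by
  conv_lhs => rw [spectral_real hA]
  rw [Matrix.trace_mul_cycle,
    (show (star hA.eigenvectorUnitary.1 : Matrix (Fin k) (Fin k) ℝ) * hA.eigenvectorUnitary.1 = 1
      from hA.eigenvectorUnitary.2.1), Matrix.one_mul, Matrix.trace_diagonal]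

/-- `tr(P) • 1 - P` is PSD for PSD `P`. -/
lemma trace_smul_one_sub_posSemidef {P : Matrix (Fin k) (Fin k) ℝ} (hP : P.PosSemidef) :
    (P.trace • (1 : Matrix (Fin k) (Fin k) ℝ) - P).PosSemidef := by
  have hH := hP.isHermitian
  set t := P.trace with ht
  set U : Matrix (Fin k) (Fin k) ℝ := hH.eigenvectorUnitary.1 with hU
  have hUU : U * (star U) = 1 := hH.eigenvectorUnitary.2.2
  have key : t • (1 : Matrix (Fin k) (Fin k) ℝ) - P =
      U * (Matrix.diagonal (fun i => t - hH.eigenvalues i)) * Uᴴ := by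
    have h1 : t • (1 : Matrix (Fin k) (Fin k) ℝ) =
        U * (Matrix.diagonal (fun _ : Fin k => t)) * (star U) := by
      rw [diag_const_eq, Matrix.mul_smul, Matrix.mul_one, Matrix.smul_mul, hUU]
    show _ = U * _ * (star U)
    rw [h1]; conv_lhs => rw [spectral_real hH]
    rw [← Matrix.sub_mul, ← Matrix.mul_sub, Matrix.diagonal_sub]
  rw [key]
  refine Matrix.PosSemidef.mul_mul_conjTranspose_same
    (Matrix.posSemidef_diagonal_iff.mpr fun i => ?_) U
  have h1 : hH.eigenvalues i ≤ ∑ j, hH.eigenvalues j :=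
    Finset.single_le_sum (fun j _ => hP.eigenvalues_nonneg j) (Finset.mem_univ i)
  simpa [ht, trace_eq_sum_eig hH, sub_nonneg] using h1

/-- `det (1 + P) ≥ 1` for PSD `P`. -/
lemma one_le_det_one_add {P : Matrix (Fin k) (Fin k) ℝ} (hP : P.PosSemidef) :
    1 ≤ (1 + P).det := by
  have hH := hP.isHermitian
  set U : Matrix (Fin k) (Fin k) ℝ := hH.eigenvectorUnitary.1 with hU
  have hUU : U * (star U) = 1 := hH.eigenvectorUnitary.2.2
  have key : 1 + P = U * (Matrix.diagonal (fun i => 1 + hH.eigenvalues i)) * (star U) := by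
    have h1 : (1 : Matrix (Fin k) (Fin k) ℝ) =
        U * (Matrix.diagonal (fun _ : Fin k => (1:ℝ))) * (star U) := by
      rw [Matrix.diagonal_one, Matrix.mul_one, hUU]
    conv_lhs => rw [h1, spectral_real hH]
    rw [← Matrix.add_mul, ← Matrix.mul_add, Matrix.diagonal_add]
  rw [key, Matrix.det_mul, Matrix.det_mul, mul_comm, ← mul_assoc, ← Matrix.det_mul,
    (show (star U) * U = 1 from hH.eigenvectorUnitary.2.1), Matrix.det_one, one_mul,
    Matrix.det_diagonal]
  calc (1:ℝ) = ∏ _i : Fin k, (1:ℝ) := by simp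
    _ ≤ ∏ i, (1 + hH.eigenvalues i) :=
        Finset.prod_le_prod (fun i _ => zero_le_one)
          (fun i _ => by linarith [hP.eigenvalues_nonneg i])

/-- PSD determinant is nonneg. -/
lemma psd_det_nonneg {P : Matrix (Fin k) (Fin k) ℝ} (hP : P.PosSemidef) : 0 ≤ P.det := by
  rw [hP.isHermitian.det_eq_prod_eigenvalues]
  exact Finset.prod_nonneg fun i _ => by simpa using hP.eigenvalues_nonneg i

/-- Loewner monotonicity of det. -/
lemma det_le_det_of_sub_psd {A B : Matrix (Fin k) (Fin k) ℝ} (hA : A.PosDef)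
    (hBA : (B - A).PosSemidef) : A.det ≤ B.det := by
  set R := CFC.sqrt A with hR
  have hRpsd : R.PosSemidef := (CFC.sqrt_nonneg A).posSemidef
  have hRR : R * R = A := CFC.sqrt_mul_sqrt_self A hA.posSemidef.nonneg
  have hdetR : 0 < R.det := by
    have h2 : R.det * R.det = A.det := by rw [← Matrix.det_mul, hRR]
    rcases lt_or_eq_of_le (psd_det_nonneg hRpsd) with h | h
    · exact h
    · exfalso; have := hA.det_pos; rw [← h2, ← h] at this; simp at this
  have hRunit : IsUnit R.det := (hdetR.ne').isUnit
  have hRinv : R * R⁻¹ = 1 := Matrix.mul_nonsing_inv R hRunit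
  have hRinv' : R⁻¹ * R = 1 := Matrix.nonsing_inv_mul R hRunit
  have hRH : Rᴴ = R := hRpsd.isHermitian
  have hRiH : (R⁻¹)ᴴ = R⁻¹ := by rw [Matrix.conjTranspose_nonsing_inv, hRH]
  have hX : (R⁻¹ * (B - A) * (R⁻¹)ᴴ).PosSemidef :=
    hBA.mul_mul_conjTranspose_same R⁻¹
  have e : R * (R⁻¹ * (B - A) * R⁻¹) * R = B - A := by
    simp only [Matrix.mul_assoc]
    rw [hRinv', Matrix.mul_one, ← Matrix.mul_assoc, hRinv, Matrix.one_mul]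
  have hBdecomp : B = R * (1 + R⁻¹ * (B - A) * (R⁻¹)ᴴ) * R := by
    rw [hRiH, Matrix.mul_add, Matrix.mul_one, Matrix.add_mul, hRR, e]
    abel
  calc A.det = R.det * 1 * R.det := by rw [mul_one, ← Matrix.det_mul, hRR]
    _ ≤ R.det * (1 + R⁻¹ * (B - A) * (R⁻¹)ᴴ).det * R.det := by
        have h1 := one_le_det_one_add hX
        nlinarith [mul_nonneg (mul_pos hdetR hdetR).le (sub_nonneg.mpr h1)]
    _ = B.det := by
        conv_rhs => rw [hBdecomp]
        rw [Matrix.det_mul, Matrix.det_mul]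

end aux

/-- For a real symmetric positive semidefinite `n×n` matrix `K` and any real `m×n`
matrix `G`, `det(I + G K Gᵀ) ≤ det(I + tr(K) · G Gᵀ)`. -/
theorem det_one_add_conj_le_det_one_add_trace_smul
    {m n : ℕ} (K : Matrix (Fin n) (Fin n) ℝ) (hK : K.PosSemidef)
    (G : Matrix (Fin m) (Fin n) ℝ) :
    (1 + G * K * Gᵀ).det ≤ (1 + K.trace • (G * Gᵀ)).det := by
  have hGT : Gᵀ = Gᴴ := (conjTranspose_eq_transpose_of_trivial G).symm
  have hGKG : (G * K * Gᵀ).PosSemidef := by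
    rw [hGT]; exact hK.mul_mul_conjTranspose_same G
  have hA : (1 + G * K * Gᵀ).PosDef :=
    Matrix.PosDef.add_posSemidef Matrix.PosDef.one hGKG
  have hdiff : (1 + K.trace • (G * Gᵀ)) - (1 + G * K * Gᵀ)
      = G * (K.trace • (1 : Matrix (Fin n) (Fin n) ℝ) - K) * Gᵀ := by
    rw [add_sub_add_left_eq_sub, Matrix.mul_sub, Matrix.sub_mul, Matrix.mul_smul,
      Matrix.mul_one, Matrix.smul_mul]
  have hpsd : ((1 + K.trace • (G * Gᵀ)) - (1 + G * K * Gᵀ)).PosSemidef := by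
    rw [hdiff, hGT]
    exact (trace_smul_one_sub_posSemidef hK).mul_mul_conjTranspose_same G
  exact det_le_det_of_sub_psd hA hpsd
end

section
/- Let G be a real m×n matrix, let P ≥ 0, and let s ≥ 1 be a real number. Then det( I_m + sP · G Gᵀ ) ≤ (2s)^{min(m,n)} · det( I_m + (P/2) · G Gᵀ ). -/
open Matrix

lemma det_one_add_smul_psd {k : ℕ} (A : Matrix (Fin k) (Fin k) ℝ) (hA : A.PosSemidef) (c : ℝ) :
    (1 + c • A).det = ∏ i, (1 + c * hA.isHermitian.eigenvalues i) := by
  set hH := hA.isHermitian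
  set U : Matrix (Fin k) (Fin k) ℝ := (hH.eigenvectorUnitary : Matrix (Fin k) (Fin k) ℝ)
  have hUU : U * star U = 1 := (Matrix.mem_unitaryGroup_iff).mp hH.eigenvectorUnitary.2
  have key : (1 : Matrix (Fin k) (Fin k) ℝ) + c • A
      = U * (1 + c • diagonal (RCLike.ofReal ∘ hH.eigenvalues)) * star U := by
    rw [Matrix.mul_add, Matrix.add_mul, Matrix.mul_one, hUU, Matrix.mul_smul, Matrix.smul_mul,
      ]
    exact congrArg (fun X => 1 + c • X) hH.spectral_theorem
  rw [key, Matrix.det_mul_right_comm, hUU, Matrix.one_mul]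
  have : (1 : Matrix (Fin k) (Fin k) ℝ) + c • diagonal (RCLike.ofReal ∘ hH.eigenvalues)
      = diagonal (fun i => 1 + c * hH.eigenvalues i) := by
    rw [← Matrix.diagonal_one, ← Matrix.diagonal_smul, ← Matrix.diagonal_add]
    simp [Function.comp, smul_eq_mul, ← Matrix.diagonal_smul]
  rw [this, Matrix.det_diagonal]

lemma aux_bound {k : ℕ} (A : Matrix (Fin k) (Fin k) ℝ) (hA : A.PosSemidef) (P s : ℝ)
    (hP : 0 ≤ P) (hs : 1 ≤ s) :
    (1 + (s * P) • A).det ≤ (2 * s) ^ k * (1 + (P / 2) • A).det := by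
  rw [det_one_add_smul_psd A hA, det_one_add_smul_psd A hA]
  have hev : ∀ i, 0 ≤ hA.isHermitian.eigenvalues i := hA.eigenvalues_nonneg
  calc ∏ i, (1 + s * P * hA.isHermitian.eigenvalues i)
      ≤ ∏ i : Fin k, (2 * s) * (1 + P / 2 * hA.isHermitian.eigenvalues i) := by
        apply Finset.prod_le_prod
        · intro i _
          have h1 := hev i
          have h2 : (0:ℝ) ≤ s := le_trans zero_le_one hs
          positivity
        · intro i _
          have := hev i
          nlinarith
    _ = (2 * s) ^ k * ∏ i, (1 + P / 2 * hA.isHermitian.eigenvalues i) := by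
        rw [Finset.prod_mul_distrib, Finset.prod_const, Finset.card_univ, Fintype.card_fin]

/-- For a real `m×n` matrix `G`, `P ≥ 0` and `s ≥ 1`,
`det(I + sP·GGᵀ) ≤ (2s)^{min(m,n)} · det(I + (P/2)·GGᵀ)`. -/
theorem det_one_add_smul_le_pow_min_mul_det
    {m n : ℕ} (G : Matrix (Fin m) (Fin n) ℝ) (P s : ℝ) (hP : 0 ≤ P) (hs : 1 ≤ s) :
    (1 + (s * P) • (G * Gᵀ)).det ≤ (2 * s) ^ min m n * (1 + (P / 2) • (G * Gᵀ)).det := by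
  have hswap : ∀ c : ℝ, (1 + c • (G * Gᵀ)).det = (1 + c • (Gᵀ * G)).det := by
    intro c
    rw [← Matrix.smul_mul, Matrix.det_one_add_mul_comm, Matrix.mul_smul]
  rcases le_total m n with h | h
  · rw [min_eq_left h]
    exact aux_bound _ (posSemidef_self_mul_conjTranspose G) P s hP hs
  · rw [min_eq_right h, hswap, hswap]
    exact aux_bound _ (posSemidef_conjTranspose_mul_self G) P s hP hs
end

section
/- Let N ≥ 2, let T ⊆ [2:N] with complement T^c = [2:N]\T, and let d ∈ T^c. Let (X_1, X_2, …, X_N, Y_2, …, Y_N, Ŷ_2, …, Ŷ_N) be finite random variables such that the Markov chain (X_1, X(T^c), Ŷ(T^c), Y_d) → (X(T), Y(T)) → Ŷ(T) holds. Then I(X_1; Ŷ_2^N, Y_d | X_2^N) + I(X(T); Y_d | X(T^c)) − I(Ŷ(T); Y(T) | X_2^N, Ŷ(T^c), Y_d) = I(X_1, X(T); Ŷ(T^c), Y_d | X(T^c)) − I(Y(T); Ŷ(T) | X_1, X_2^N, Ŷ(T^c), Y_d) − I(X(T); Ŷ(T^c) | X(T^c), Y_d), where X_2^N = X([2:N])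 and Ŷ_2^N = Ŷ([2:N]). -/
/-!
The key mutual-information identity (Appendix C of Lim–Kim–El Gamal–Chung) used to
compare noisy network coding with the Kramer–Gastpar–Gupta compress–forward bound.
-/

open scoped BigOperators Classical

namespace NNC

/-- The probability that `X` takes the value `b` under the pmf `μ` on the finite sample
space `Ω`. -/
noncomputable def prob {Ω : Type*} [Fintype Ω] {β : Type*} (μ : Ω → ℝ) (X : Ω → β)
    (b : β) : ℝ :=
  ∑ ω, if X ω = b then μ ω else 0

/-- Shannon entropy (in bits) of `X` under the pmf `μ`. -/
noncomputable def ent {Ω : Type*} [Fintype Ω] {β : Type*} [Fintype β]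
    (μ : Ω → ℝ) (X : Ω → β) : ℝ :=
  - ∑ b, prob μ X b * Real.logb 2 (prob μ X b)

/-- Conditional mutual information `I(X; Y | Z)` (in bits) under the pmf `μ`. -/
noncomputable def condMI {Ω : Type*} [Fintype Ω] {α β γ : Type*} [Fintype α] [Fintype β]
    [Fintype γ] (μ : Ω → ℝ) (X : Ω → α) (Y : Ω → β) (Z : Ω → γ) : ℝ :=
  ent μ (fun ω => (X ω, Z ω)) + ent μ (fun ω => (Y ω, Z ω))
    - ent μ (fun ω => (X ω, Y ω, Z ω)) - ent μ Z

variable {Ω : Type*} [Fintype Ω] (μ : Ω → ℝ)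

lemma prob_nonneg (hμ0 : ∀ ω, 0 ≤ μ ω) {β : Type*} (X : Ω → β) (b : β) :
    0 ≤ prob μ X b :=
  Finset.sum_nonneg fun ω _ => by split <;> simp [hμ0 ω]

lemma prob_congr {β γ : Type*} (Z₁ : Ω → β) (Z₂ : Ω → γ) (b : β) (c : γ)
    (h : ∀ ω, Z₁ ω = b ↔ Z₂ ω = c) : prob μ Z₁ b = prob μ Z₂ c :=
  Finset.sum_congr rfl fun ω _ => by simp only [h ω]

lemma prob_eq_zero_of_not_mem_range {β : Type*} (Z : Ω → β) (b : β)
    (h : b ∉ Set.range Z) : prob μ Z b = 0 := by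
  apply Finset.sum_eq_zero
  intro ω _
  rw [if_neg]
  exact fun hz => h ⟨ω, hz⟩

/-- right marginal: summing out the second component. -/
lemma sum_prob_snd {α β : Type*} [Fintype β] (A : Ω → α) (B : Ω → β) (a : α) :
    ∑ b, prob μ (fun ω => (A ω, B ω)) (a, b) = prob μ A a := by
  unfold prob
  rw [Finset.sum_comm]
  refine Finset.sum_congr rfl fun ω _ => ?_
  by_cases h : A ω = a
  · simp [Prod.ext_iff, h]
  · simp [Prod.ext_iff, h]

/-- left marginal: summing out the first component. -/
lemma sum_prob_fst {α β : Type*} [Fintype α] (A : Ω → α) (B : Ω → β) (b : β) :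
    ∑ a, prob μ (fun ω => (A ω, B ω)) (a, b) = prob μ B b := by
  unfold prob
  rw [Finset.sum_comm]
  refine Finset.sum_congr rfl fun ω _ => ?_
  by_cases h : B ω = b
  · simp [Prod.ext_iff, h]
  · simp [Prod.ext_iff, h]

lemma sum_prob_triple_fst {α β γ : Type*} [Fintype α] (A : Ω → α) (B : Ω → β) (C : Ω → γ)
    (b : β) (c : γ) :
    ∑ a, prob μ (fun ω => (A ω, B ω, C ω)) (a, b, c)
      = prob μ (fun ω => (B ω, C ω)) (b, c) := by
  unfold prob
  rw [Finset.sum_comm]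
  refine Finset.sum_congr rfl fun ω _ => ?_
  by_cases h : B ω = b ∧ C ω = c
  · simp [Prod.ext_iff, h.1, h.2]
  · rw [Finset.sum_eq_zero, if_neg] <;> simp_all [Prod.ext_iff]

lemma sum_prob_triple_trd {α β γ : Type*} [Fintype γ] (A : Ω → α) (B : Ω → β) (C : Ω → γ)
    (a : α) (b : β) :
    ∑ c, prob μ (fun ω => (A ω, B ω, C ω)) (a, b, c)
      = prob μ (fun ω => (A ω, B ω)) (a, b) := by
  unfold prob
  rw [Finset.sum_comm]
  refine Finset.sum_congr rfl fun ω _ => ?_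
  by_cases h : A ω = a ∧ B ω = b
  · simp [Prod.ext_iff, h.1, h.2]
  · rw [Finset.sum_eq_zero, if_neg] <;> simp_all [Prod.ext_iff]

variable {Ω : Type*} [Fintype Ω] (μ : Ω → ℝ)

lemma ent_congr {β γ : Type*} [Fintype β] [Fintype γ] (Z₁ : Ω → β) (Z₂ : Ω → γ)
    (f : β → γ) (g : γ → β)
    (h₁ : ∀ ω, f (Z₁ ω) = Z₂ ω) (h₂ : ∀ ω, g (Z₂ ω) = Z₁ ω) :
    ent μ Z₁ = ent μ Z₂ := by
  unfold ent
  congr 1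
  rw [← Finset.sum_filter_of_ne (p := fun b => b ∈ Set.range Z₁)
      (by intro b _ hb; by_contra h
          rw [prob_eq_zero_of_not_mem_range μ Z₁ b h] at hb; simp at hb),
    ← Finset.sum_filter_of_ne (p := fun c => c ∈ Set.range Z₂)
      (by intro c _ hc; by_contra h
          rw [prob_eq_zero_of_not_mem_range μ Z₂ c h] at hc; simp at hc)]
  refine Finset.sum_bij (fun b _ => f b) ?_ ?_ ?_ ?_
  · rintro b hb
    simp only [Finset.mem_filter, Finset.mem_univ, true_and] at hb ⊢
    obtain ⟨ω, hω⟩ := hb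
    exact ⟨ω, by rw [← hω, h₁]⟩
  · rintro b₁ hb₁ b₂ hb₂ hf
    simp only [Finset.mem_filter, Finset.mem_univ, true_and] at hb₁ hb₂
    obtain ⟨ω₁, hω₁⟩ := hb₁; obtain ⟨ω₂, hω₂⟩ := hb₂
    have e1 : g (f b₁) = b₁ := by rw [← hω₁, h₁, h₂]
    have e2 : g (f b₂) = b₂ := by rw [← hω₂, h₁, h₂]
    rw [← e1, ← e2, hf]
  · rintro c hc
    simp only [Finset.mem_filter, Finset.mem_univ, true_and] at hc
    obtain ⟨ω, hω⟩ := hc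
    refine ⟨Z₁ ω, ?_, by rw [h₁, hω]⟩
    simp only [Finset.mem_filter, Finset.mem_univ, true_and]
    exact ⟨ω, rfl⟩
  · rintro b hb
    simp only [Finset.mem_filter, Finset.mem_univ, true_and] at hb
    obtain ⟨ω₀, hω₀⟩ := hb
    have : prob μ Z₁ b = prob μ Z₂ (f b) := by
      refine prob_congr μ _ _ _ _ fun ω => ⟨fun h => by rw [← h₁ ω, h], fun h => ?_⟩
      have : g (f b) = b := by rw [← hω₀, h₁, h₂]
      rw [← h₂ ω, h, this]
    rw [this]


def recomb {I : Type*} [Fintype I] [DecidableEq I] (T : Finset I) (F : I → Type*)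
    (fT : ∀ k : {k // k ∈ T}, F k.1) (fC : ∀ k : {k // k ∈ Tᶜ}, F k.1) (k : I) : F k :=
  if h : k ∈ T then fT ⟨k, h⟩ else fC ⟨k, Finset.mem_compl.mpr h⟩

lemma recomb_eq {I : Type*} [Fintype I] [DecidableEq I] (T : Finset I) (F : I → Type*)
    (f : ∀ k, F k) :
    (recomb T F (fun k => f k.1) (fun k => f k.1)) = f := by
  funext k; unfold recomb; split <;> rfl

end NNC

namespace NNC
variable {Ω : Type*} [Fintype Ω] (μ : Ω → ℝ)

lemma condIndep_ent (hμ0 : ∀ ω, 0 ≤ μ ω) {α β γ : Type*} [Fintype α] [Fintype β] [Fintype γ]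
    (A : Ω → α) (B : Ω → β) (C : Ω → γ)
    (h : ∀ a b c, prob μ (fun ω => (A ω, B ω, C ω)) (a, b, c) * prob μ B b
      = prob μ (fun ω => (A ω, B ω)) (a, b) * prob μ (fun ω => (B ω, C ω)) (b, c)) :
    ent μ (fun ω => (A ω, B ω)) + ent μ (fun ω => (B ω, C ω))
      = ent μ (fun ω => (A ω, B ω, C ω)) + ent μ B := by
  set P3 : α → β → γ → ℝ := fun a b c => prob μ (fun ω => (A ω, B ω, C ω)) (a, b, c) with hP3
  set PAB : α → β → ℝ := fun a b => prob μ (fun ω => (A ω, B ω)) (a, b) with hPAB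
  set PBC : β → γ → ℝ := fun b c => prob μ (fun ω => (B ω, C ω)) (b, c) with hPBC
  set PB : β → ℝ := fun b => prob μ B b with hPB
  have hm1 : ∀ a b, PAB a b = ∑ c, P3 a b c := fun a b =>
    (sum_prob_triple_trd μ A B C a b).symm
  have hm2 : ∀ b c, PBC b c = ∑ a, P3 a b c := fun b c =>
    (sum_prob_triple_fst μ A B C b c).symm
  have hm3 : ∀ b, PB b = ∑ a, PAB a b := fun b => (sum_prob_fst μ A B b).symm
  have hnn3 : ∀ a b c, 0 ≤ P3 a b c := fun a b c => prob_nonneg μ hμ0 _ _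
  have hnnAB : ∀ a b, 0 ≤ PAB a b := fun a b => prob_nonneg μ hμ0 _ _
  have hnnBC : ∀ b c, 0 ≤ PBC b c := fun b c => prob_nonneg μ hμ0 _ _
  have hleAB : ∀ a b c, P3 a b c ≤ PAB a b := fun a b c => by
    rw [hm1]; exact Finset.single_le_sum (fun c _ => hnn3 a b c) (Finset.mem_univ c)
  have hleBC : ∀ a b c, P3 a b c ≤ PBC b c := fun a b c => by
    rw [hm2]; exact Finset.single_le_sum (fun a _ => hnn3 a b c) (Finset.mem_univ a)
  have hleB : ∀ a b, PAB a b ≤ PB b := fun a b => by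
    rw [hm3]; exact Finset.single_le_sum (fun a _ => hnnAB a b) (Finset.mem_univ a)
  -- rewrite all four entropy sums as sums over α × β × γ
  unfold ent
  have key : ∀ a b c,
      P3 a b c * Real.logb 2 (PAB a b) + P3 a b c * Real.logb 2 (PBC b c)
        = P3 a b c * Real.logb 2 (P3 a b c) + P3 a b c * Real.logb 2 (PB b) := by
    intro a b c
    rcases eq_or_lt_of_le (hnn3 a b c) with h0 | hpos
    · rw [← h0]; ring
    · have hab : 0 < PAB a b := lt_of_lt_of_le hpos (hleAB a b c)
      have hbc : 0 < PBC b c := lt_of_lt_of_le hpos (hleBC a b c)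
      have hb : 0 < PB b := lt_of_lt_of_le hab (hleB a b)
      have := h a b c
      have hlog : Real.logb 2 (P3 a b c) + Real.logb 2 (PB b)
          = Real.logb 2 (PAB a b) + Real.logb 2 (PBC b c) := by
        rw [← Real.logb_mul hpos.ne' hb.ne', ← Real.logb_mul hab.ne' hbc.ne', this]
      nlinarith [hlog]
  have e1 : ∑ x : α × β, prob μ (fun ω => (A ω, B ω)) x * Real.logb 2 (prob μ (fun ω => (A ω, B ω)) x)
      = ∑ a, ∑ b, ∑ c, P3 a b c * Real.logb 2 (PAB a b) := by
    rw [Fintype.sum_prod_type]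
    refine Finset.sum_congr rfl fun a _ => Finset.sum_congr rfl fun b _ => ?_
    rw [← Finset.sum_mul, ← hm1]
  have e2 : ∑ x : β × γ, prob μ (fun ω => (B ω, C ω)) x * Real.logb 2 (prob μ (fun ω => (B ω, C ω)) x)
      = ∑ a, ∑ b, ∑ c, P3 a b c * Real.logb 2 (PBC b c) := by
    rw [Fintype.sum_prod_type]
    have : ∀ b, ∑ c, PBC b c * Real.logb 2 (PBC b c)
        = ∑ c, ∑ a, P3 a b c * Real.logb 2 (PBC b c) := by
      intro b
      refine Finset.sum_congr rfl fun c _ => ?_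
      rw [hm2, Finset.sum_mul]
    refine (Finset.sum_congr rfl fun b _ => this b).trans ?_
    rw [show (∑ b, ∑ c, ∑ a, P3 a b c * Real.logb 2 (PBC b c))
        = ∑ b, ∑ a, ∑ c, P3 a b c * Real.logb 2 (PBC b c) from
      Finset.sum_congr rfl fun b _ => Finset.sum_comm]
    exact Finset.sum_comm
  have e3 : ∑ b, prob μ B b * Real.logb 2 (prob μ B b)
      = ∑ a, ∑ b, ∑ c, P3 a b c * Real.logb 2 (PB b) := by
    have : ∀ b, PB b * Real.logb 2 (PB b)
        = ∑ a, ∑ c, P3 a b c * Real.logb 2 (PB b) := by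
      intro b
      have hPBsum : PB b = ∑ a, ∑ c, P3 a b c := by
        rw [hm3]; exact Finset.sum_congr rfl fun a _ => hm1 a b
      nth_rewrite 1 [hPBsum]
      rw [Finset.sum_mul]
      exact Finset.sum_congr rfl fun a _ => Finset.sum_mul _ _ _
    refine (Finset.sum_congr rfl fun b _ => this b).trans ?_
    exact Finset.sum_comm
  have e4 : ∑ x : α × β × γ, prob μ (fun ω => (A ω, B ω, C ω)) x
        * Real.logb 2 (prob μ (fun ω => (A ω, B ω, C ω)) x)
      = ∑ a, ∑ b, ∑ c, P3 a b c * Real.logb 2 (P3 a b c) := by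
    rw [Fintype.sum_prod_type]
    exact Finset.sum_congr rfl fun a _ => Fintype.sum_prod_type _
  have main : ∑ a, ∑ b, ∑ c,
        (P3 a b c * Real.logb 2 (PAB a b) + P3 a b c * Real.logb 2 (PBC b c))
      = ∑ a, ∑ b, ∑ c,
        (P3 a b c * Real.logb 2 (P3 a b c) + P3 a b c * Real.logb 2 (PB b)) :=
    Finset.sum_congr rfl fun a _ => Finset.sum_congr rfl fun b _ =>
      Finset.sum_congr rfl fun c _ => key a b c
  simp only [Finset.sum_add_distrib] at main
  rw [show (prob μ B) = PB from rfl] at *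
  linarith [e1, e2, e3, e4, main]

lemma prob_weak_union {α τ β γ : Type*} [Fintype α] [Fintype τ] [Fintype γ] (hμ0 : ∀ ω, 0 ≤ μ ω)
    (A : Ω → α) (Tt : Ω → τ) (B : Ω → β) (C : Ω → γ)
    (h : ∀ (a : α × τ) (b : β) (c : γ),
      prob μ (fun ω => ((A ω, Tt ω), B ω, C ω)) (a, b, c) * prob μ B b
        = prob μ (fun ω => ((A ω, Tt ω), B ω)) (a, b)
          * prob μ (fun ω => (B ω, C ω)) (b, c)) :
    ∀ (a : α) (s : τ × β) (c : γ),
      prob μ (fun ω => (A ω, (Tt ω, B ω), C ω)) (a, s, c)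
          * prob μ (fun ω => (Tt ω, B ω)) s
        = prob μ (fun ω => (A ω, (Tt ω, B ω))) (a, s)
          * prob μ (fun ω => ((Tt ω, B ω), C ω)) (s, c) := by
  rintro a ⟨t, b⟩ c
  set Q3 : α → ℝ := fun x => prob μ (fun ω => ((A ω, Tt ω), B ω, C ω)) ((x, t), b, c)
    with hQ3d
  set Q2 : α → ℝ := fun x => prob μ (fun ω => ((A ω, Tt ω), B ω)) ((x, t), b) with hQ2d
  set QB : ℝ := prob μ B b with hQBd
  set QBC : ℝ := prob μ (fun ω => (B ω, C ω)) (b, c) with hQBCd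
  have hx : ∀ x, Q3 x * QB = Q2 x * QBC := fun x => h (x, t) b c
  have c1 : ∀ x, prob μ (fun ω => (A ω, (Tt ω, B ω), C ω)) (x, (t, b), c) = Q3 x := by
    intro x
    refine prob_congr μ _ _ _ _ fun ω => ?_
    simp only [Prod.ext_iff]; tauto
  have c2 : ∀ x, prob μ (fun ω => (A ω, (Tt ω, B ω))) (x, (t, b)) = Q2 x := by
    intro x
    refine prob_congr μ _ _ _ _ fun ω => ?_
    simp only [Prod.ext_iff]; tauto
  have c3 : prob μ (fun ω => (Tt ω, B ω)) (t, b) = ∑ x, Q2 x := by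
    rw [← sum_prob_fst μ A (fun ω => (Tt ω, B ω)) (t, b)]
    exact Finset.sum_congr rfl fun x _ => c2 x
  have c4 : prob μ (fun ω => ((Tt ω, B ω), C ω)) ((t, b), c) = ∑ x, Q3 x := by
    rw [← sum_prob_triple_fst μ A (fun ω => (Tt ω, B ω)) C (t, b) c]
    exact Finset.sum_congr rfl fun x _ => c1 x
  rw [c1, c2, c3, c4]
  have hnn2 : ∀ x, 0 ≤ Q2 x := fun x => prob_nonneg μ hμ0 _ _
  have hnn3 : ∀ x, 0 ≤ Q3 x := fun x => prob_nonneg μ hμ0 _ _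
  have h32 : ∀ x, Q3 x ≤ Q2 x := by
    intro x
    rw [hQ2d]
    simp only
    rw [← sum_prob_triple_trd μ (fun ω => (A ω, Tt ω)) B C ((x, t)) b]
    exact Finset.single_le_sum
      (f := fun c' => prob μ (fun ω => ((A ω, Tt ω), B ω, C ω)) ((x, t), b, c'))
      (fun c' _ => prob_nonneg μ hμ0 _ _) (Finset.mem_univ c)
  have h2B : ∀ x, Q2 x ≤ QB := by
    intro x
    rw [hQBd, ← sum_prob_fst μ (fun ω => (A ω, Tt ω)) B b]
    exact Finset.single_le_sum
      (f := fun a' => prob μ (fun ω => ((A ω, Tt ω), B ω)) (a', b))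
      (fun a' _ => prob_nonneg μ hμ0 _ _) (Finset.mem_univ (x, t))
  rcases eq_or_ne QB 0 with h0 | hne
  · have hz2 : ∀ x, Q2 x = 0 := fun x => le_antisymm (h0 ▸ h2B x) (hnn2 x)
    have hz3 : ∀ x, Q3 x = 0 := fun x => le_antisymm ((h32 x).trans (le_of_eq (hz2 x))) (hnn3 x)
    simp [hz2, hz3]
  · apply mul_left_cancel₀ hne
    have hsum : QB * (∑ x, Q3 x) = (∑ x, Q2 x) * QBC := by
      rw [Finset.mul_sum]
      rw [Finset.sum_congr rfl fun x (_ : x ∈ Finset.univ) => by rw [mul_comm, hx x]]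
      rw [← Finset.sum_mul]
    linear_combination (∑ x, Q2 x) * hx a - Q2 a * hsum

end NNC

open NNC

/-- **Mutual-information identity behind the compress–forward comparison.**  Let
`N ≥ 2`, index the nodes `2, …, N` by `{k : Fin N // k ≠ 0}` (node 1 being `0`), let
`T ⊆ [2:N]` with complement `Tᶜ = [2:N] \ T` and `d ∈ Tᶜ`.  If the Markov chain
`(X₁, X(Tᶜ), Ŷ(Tᶜ), Y_d) → (X(T), Y(T)) → Ŷ(T)` holds, then
`I(X₁; Ŷ₂ᴺ, Y_d | X₂ᴺ) + I(X(T); Y_d | X(Tᶜ)) − I(Ŷ(T); Y(T) | X₂ᴺ, Ŷ(Tᶜ), Y_d)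
  = I(X₁, X(T); Ŷ(Tᶜ), Y_d | X(Tᶜ)) − I(Y(T); Ŷ(T) | X₁, X₂ᴺ, Ŷ(Tᶜ), Y_d)
    − I(X(T); Ŷ(Tᶜ) | X(Tᶜ), Y_d)`. -/
theorem compress_forward_comparison_identity
    (N : ℕ) [NeZero N] (hN : 2 ≤ N)
    (Ω : Type) [Fintype Ω] (μ : Ω → ℝ)
    (hμ0 : ∀ ω, 0 ≤ μ ω) (hμ1 : ∑ ω, μ ω = 1)
    (𝒳 : Fin N → Type) [∀ k, Fintype (𝒳 k)]
    (𝒴 Yh : {k : Fin N // k ≠ 0} → Type)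
    [∀ k, Fintype (𝒴 k)] [∀ k, Fintype (Yh k)]
    (X : ∀ k : Fin N, Ω → 𝒳 k)
    (Y : ∀ k : {k : Fin N // k ≠ 0}, Ω → 𝒴 k)
    (Yhat : ∀ k : {k : Fin N // k ≠ 0}, Ω → Yh k)
    (T : Finset {k : Fin N // k ≠ 0}) (d : {k : Fin N // k ≠ 0}) (hd : d ∈ Tᶜ)
    (hMarkov : ∀ (a : 𝒳 0 × (∀ k : {k // k ∈ Tᶜ}, 𝒳 k.1.1)
          × (∀ k : {k // k ∈ Tᶜ}, Yh k.1) × 𝒴 d)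
        (b : (∀ k : {k // k ∈ T}, 𝒳 k.1.1) × (∀ k : {k // k ∈ T}, 𝒴 k.1))
        (c : ∀ k : {k // k ∈ T}, Yh k.1),
      prob μ (fun ω =>
          ((X 0 ω, (fun k : {k // k ∈ Tᶜ} => X k.1.1 ω),
            (fun k : {k // k ∈ Tᶜ} => Yhat k.1 ω), Y d ω),
           ((fun k : {k // k ∈ T} => X k.1.1 ω), (fun k : {k // k ∈ T} => Y k.1 ω)),
           (fun k : {k // k ∈ T} => Yhat k.1 ω))) (a, b, c)
        * prob μ (fun ω =>
            ((fun k : {k // k ∈ T} => X k.1.1 ω),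
             (fun k : {k // k ∈ T} => Y k.1 ω))) b
      = prob μ (fun ω =>
          ((X 0 ω, (fun k : {k // k ∈ Tᶜ} => X k.1.1 ω),
            (fun k : {k // k ∈ Tᶜ} => Yhat k.1 ω), Y d ω),
           ((fun k : {k // k ∈ T} => X k.1.1 ω),
            (fun k : {k // k ∈ T} => Y k.1 ω)))) (a, b)
        * prob μ (fun ω =>
            (((fun k : {k // k ∈ T} => X k.1.1 ω),
              (fun k : {k // k ∈ T} => Y k.1 ω)),
             (fun k : {k // k ∈ T} => Yhat k.1 ω))) (b, c)) :
    condMI μ (X 0)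
        (fun ω => ((fun k : {k : Fin N // k ≠ 0} => Yhat k ω), Y d ω))
        (fun ω => fun k : {k : Fin N // k ≠ 0} => X k.1 ω)
      + condMI μ
        (fun ω => fun k : {k // k ∈ T} => X k.1.1 ω)
        (Y d)
        (fun ω => fun k : {k // k ∈ Tᶜ} => X k.1.1 ω)
      - condMI μ
        (fun ω => fun k : {k // k ∈ T} => Yhat k.1 ω)
        (fun ω => fun k : {k // k ∈ T} => Y k.1 ω)
        (fun ω => ((fun k : {k : Fin N // k ≠ 0} => X k.1 ω),
                   (fun k : {k // k ∈ Tᶜ} => Yhat k.1 ω), Y d ω))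
    = condMI μ
        (fun ω => (X 0 ω, (fun k : {k // k ∈ T} => X k.1.1 ω)))
        (fun ω => ((fun k : {k // k ∈ Tᶜ} => Yhat k.1 ω), Y d ω))
        (fun ω => fun k : {k // k ∈ Tᶜ} => X k.1.1 ω)
      - condMI μ
        (fun ω => fun k : {k // k ∈ T} => Y k.1 ω)
        (fun ω => fun k : {k // k ∈ T} => Yhat k.1 ω)
        (fun ω => (X 0 ω, (fun k : {k : Fin N // k ≠ 0} => X k.1 ω),
                   (fun k : {k // k ∈ Tᶜ} => Yhat k.1 ω), Y d ω))
      - condMI μ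
        (fun ω => fun k : {k // k ∈ T} => X k.1.1 ω)
        (fun ω => fun k : {k // k ∈ Tᶜ} => Yhat k.1 ω)
        (fun ω => ((fun k : {k // k ∈ Tᶜ} => X k.1.1 ω), Y d ω)) := by
  have hrX : ∀ ω, recomb T (fun k => 𝒳 k.1)
      (fun k : {k // k ∈ T} => X k.1.1 ω) (fun k : {k // k ∈ Tᶜ} => X k.1.1 ω)
        = (fun k : {k : Fin N // k ≠ 0} => X k.1 ω) :=
    fun ω => recomb_eq T (fun k => 𝒳 k.1) (fun k => X k.1 ω)
  have hrY : ∀ ω, recomb T Yh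
      (fun k : {k // k ∈ T} => Yhat k.1 ω) (fun k : {k // k ∈ Tᶜ} => Yhat k.1 ω)
        = (fun k : {k : Fin N // k ≠ 0} => Yhat k ω) :=
    fun ω => recomb_eq T Yh (fun k => Yhat k ω)
  have r1 : ent μ (fun ω => (X 0 ω, (fun k : {k : Fin N // k ≠ 0} => X k.1 ω))) = ent μ (fun ω => (X 0 ω, (fun k : {k // k ∈ T} => X k.1.1 ω), (fun k : {k // k ∈ Tᶜ} => X k.1.1 ω))) :=
    ent_congr μ _ _
      (fun z => (z.1, fun k => z.2 k.1, fun k => z.2 k.1))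
      (fun z => (z.1, recomb T (fun k => 𝒳 k.1) z.2.1 z.2.2))
      (fun ω => rfl)
      (fun ω => congrArg (fun t => (X 0 ω, t)) (hrX ω))
  have r2 : ent μ (fun ω => (((fun k : {k : Fin N // k ≠ 0} => Yhat k ω), Y d ω), (fun k : {k : Fin N // k ≠ 0} => X k.1 ω))) = ent μ (fun ω => ((fun k : {k // k ∈ T} => X k.1.1 ω), (fun k : {k // k ∈ Tᶜ} => X k.1.1 ω), (fun k : {k // k ∈ Tᶜ} => Yhat k.1 ω), Y d ω, (fun k : {k // k ∈ T} => Yhat k.1 ω))) :=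
    ent_congr μ _ _
      (fun z => (fun k => z.2 k.1, fun k => z.2 k.1, fun k => z.1.1 k.1, z.1.2, fun k => z.1.1 k.1))
      (fun z => ((recomb T Yh z.2.2.2.2 z.2.2.1, z.2.2.2.1), recomb T (fun k => 𝒳 k.1) z.1 z.2.1))
      (fun ω => rfl)
      (fun ω => congrArg₂ (fun s t => ((s, Y d ω), t)) (hrY ω) (hrX ω))
  have r3 : ent μ (fun ω => (X 0 ω, ((fun k : {k : Fin N // k ≠ 0} => Yhat k ω), Y d ω), (fun k : {k : Fin N // k ≠ 0} => X k.1 ω))) = ent μ (fun ω => (X 0 ω, (fun k : {k // k ∈ T} => X k.1.1 ω), (fun k : {k // k ∈ Tᶜ} => X k.1.1 ω), (fun k : {k // k ∈ Tᶜ} => Yhat k.1 ω), Y d ω, (fun k : {k // k ∈ T} => Yhat k.1 ω))) :=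
    ent_congr μ _ _
      (fun z => (z.1, fun k => z.2.2 k.1, fun k => z.2.2 k.1, fun k => z.2.1.1 k.1, z.2.1.2, fun k => z.2.1.1 k.1))
      (fun z => (z.1, (recomb T Yh z.2.2.2.2.2 z.2.2.2.1, z.2.2.2.2.1), recomb T (fun k => 𝒳 k.1) z.2.1 z.2.2.1))
      (fun ω => rfl)
      (fun ω => congrArg₂ (fun s t => (X 0 ω, (s, Y d ω), t)) (hrY ω) (hrX ω))
  have r4 : ent μ (fun ω => fun k : {k : Fin N // k ≠ 0} => X k.1 ω) = ent μ (fun ω => ((fun k : {k // k ∈ T} => X k.1.1 ω), (fun k : {k // k ∈ Tᶜ} => X k.1.1 ω))) :=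
    ent_congr μ _ _
      (fun z => (fun k => z k.1, fun k => z k.1))
      (fun z => recomb T (fun k => 𝒳 k.1) z.1 z.2)
      (fun ω => rfl)
      (fun ω => hrX ω)
  have r6 : ent μ (fun ω => (Y d ω, (fun k : {k // k ∈ Tᶜ} => X k.1.1 ω))) = ent μ (fun ω => ((fun k : {k // k ∈ Tᶜ} => X k.1.1 ω), Y d ω)) :=
    ent_congr μ _ _
      (fun z => (z.2, z.1))
      (fun z => (z.2, z.1))
      (fun ω => rfl)
      (fun ω => rfl)
  have r7 : ent μ (fun ω => ((fun k : {k // k ∈ T} => X k.1.1 ω), Y d ω, (fun k : {k // k ∈ Tᶜ} => X k.1.1 ω))) = ent μ (fun ω => ((fun k : {k // k ∈ T} => X k.1.1 ω), (fun k : {k // k ∈ Tᶜ} => X k.1.1 ω), Y d ω)) :=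
    ent_congr μ _ _
      (fun z => (z.1, z.2.2, z.2.1))
      (fun z => (z.1, z.2.2, z.2.1))
      (fun ω => rfl)
      (fun ω => rfl)
  have r9 : ent μ (fun ω => ((fun k : {k // k ∈ T} => Yhat k.1 ω), (fun k : {k : Fin N // k ≠ 0} => X k.1 ω), (fun k : {k // k ∈ Tᶜ} => Yhat k.1 ω), Y d ω)) = ent μ (fun ω => ((fun k : {k // k ∈ T} => X k.1.1 ω), (fun k : {k // k ∈ Tᶜ} => X k.1.1 ω), (fun k : {k // k ∈ Tᶜ} => Yhat k.1 ω), Y d ω, (fun k : {k // k ∈ T} => Yhat k.1 ω))) :=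
    ent_congr μ _ _
      (fun z => (fun k => z.2.1 k.1, fun k => z.2.1 k.1, z.2.2.1, z.2.2.2, z.1))
      (fun z => (z.2.2.2.2, recomb T (fun k => 𝒳 k.1) z.1 z.2.1, z.2.2.1, z.2.2.2.1))
      (fun ω => rfl)
      (fun ω => congrArg (fun t => ((fun k : {k // k ∈ T} => Yhat k.1 ω), t, (fun k : {k // k ∈ Tᶜ} => Yhat k.1 ω), Y d ω)) (hrX ω))
  have r10 : ent μ (fun ω => ((fun k : {k // k ∈ T} => Y k.1 ω), (fun k : {k : Fin N // k ≠ 0} => X k.1 ω), (fun k : {k // k ∈ Tᶜ} => Yhat k.1 ω), Y d ω)) = ent μ (fun ω => (((fun k : {k // k ∈ Tᶜ} => X k.1.1 ω), (fun k : {k // k ∈ Tᶜ} => Yhat k.1 ω), Y d ω), ((fun k : {k // k ∈ T} => X k.1.1 ω), (fun k : {k // k ∈ T} => Y k.1 ω)))) :=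
    ent_congr μ _ _
      (fun z => ((fun k => z.2.1 k.1, z.2.2.1, z.2.2.2), (fun k => z.2.1 k.1, z.1)))
      (fun z => (z.2.2, recomb T (fun k => 𝒳 k.1) z.2.1 z.1.1, z.1.2.1, z.1.2.2))
      (fun ω => rfl)
      (fun ω => congrArg (fun t => ((fun k : {k // k ∈ T} => Y k.1 ω), t, (fun k : {k // k ∈ Tᶜ} => Yhat k.1 ω), Y d ω)) (hrX ω))
  have r11 : ent μ (fun ω => ((fun k : {k // k ∈ T} => Yhat k.1 ω), (fun k : {k // k ∈ T} => Y k.1 ω), (fun k : {k : Fin N // k ≠ 0} => X k.1 ω), (fun k : {k // k ∈ Tᶜ} => Yhat k.1 ω), Y d ω)) = ent μ (fun ω => ((((fun k : {k // k ∈ Tᶜ} => X k.1.1 ω), (fun k : {k // k ∈ Tᶜ} => Yhat k.1 ω), Y d ω), ((fun k : {k // k ∈ T} => X k.1.1 ω), (fun k : {k // k ∈ T} => Y k.1 ω))), (fun k : {k // k ∈ T} => Yhat k.1 ω))) :=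
    ent_congr μ _ _
      (fun z => (((fun k => z.2.2.1 k.1, z.2.2.2.1, z.2.2.2.2), (fun k => z.2.2.1 k.1, z.2.1)), z.1))
      (fun z => (z.2, z.1.2.2, recomb T (fun k => 𝒳 k.1) z.1.2.1 z.1.1.1, z.1.1.2.1, z.1.1.2.2))
      (fun ω => rfl)
      (fun ω => congrArg (fun t => ((fun k : {k // k ∈ T} => Yhat k.1 ω), (fun k : {k // k ∈ T} => Y k.1 ω), t, (fun k : {k // k ∈ Tᶜ} => Yhat k.1 ω), Y d ω)) (hrX ω))
  have r12 : ent μ (fun ω => ((fun k : {k : Fin N // k ≠ 0} => X k.1 ω), (fun k : {k // k ∈ Tᶜ} => Yhat k.1 ω), Y d ω)) = ent μ (fun ω => ((fun k : {k // k ∈ T} => X k.1.1 ω), (fun k : {k // k ∈ Tᶜ} => X k.1.1 ω), (fun k : {k // k ∈ Tᶜ} => Yhat k.1 ω), Y d ω)) :=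
    ent_congr μ _ _
      (fun z => (fun k => z.1 k.1, fun k => z.1 k.1, z.2.1, z.2.2))
      (fun z => (recomb T (fun k => 𝒳 k.1) z.1 z.2.1, z.2.2.1, z.2.2.2))
      (fun ω => rfl)
      (fun ω => congrArg (fun t => (t, (fun k : {k // k ∈ Tᶜ} => Yhat k.1 ω), Y d ω)) (hrX ω))
  have r13 : ent μ (fun ω => ((X 0 ω, (fun k : {k // k ∈ T} => X k.1.1 ω)), (fun k : {k // k ∈ Tᶜ} => X k.1.1 ω))) = ent μ (fun ω => (X 0 ω, (fun k : {k // k ∈ T} => X k.1.1 ω), (fun k : {k // k ∈ Tᶜ} => X k.1.1 ω))) :=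
    ent_congr μ _ _
      (fun z => (z.1.1, z.1.2, z.2))
      (fun z => ((z.1, z.2.1), z.2.2))
      (fun ω => rfl)
      (fun ω => rfl)
  have r14 : ent μ (fun ω => (((fun k : {k // k ∈ Tᶜ} => Yhat k.1 ω), Y d ω), (fun k : {k // k ∈ Tᶜ} => X k.1.1 ω))) = ent μ (fun ω => ((fun k : {k // k ∈ Tᶜ} => X k.1.1 ω), (fun k : {k // k ∈ Tᶜ} => Yhat k.1 ω), Y d ω)) :=
    ent_congr μ _ _
      (fun z => (z.2, z.1.1, z.1.2))
      (fun z => ((z.2.1, z.2.2), z.1))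
      (fun ω => rfl)
      (fun ω => rfl)
  have r15 : ent μ (fun ω => ((X 0 ω, (fun k : {k // k ∈ T} => X k.1.1 ω)), ((fun k : {k // k ∈ Tᶜ} => Yhat k.1 ω), Y d ω), (fun k : {k // k ∈ Tᶜ} => X k.1.1 ω))) = ent μ (fun ω => (X 0 ω, (fun k : {k // k ∈ T} => X k.1.1 ω), (fun k : {k // k ∈ Tᶜ} => X k.1.1 ω), (fun k : {k // k ∈ Tᶜ} => Yhat k.1 ω), Y d ω)) :=
    ent_congr μ _ _
      (fun z => (z.1.1, z.1.2, z.2.2, z.2.1.1, z.2.1.2))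
      (fun z => ((z.1, z.2.1), (z.2.2.2.1, z.2.2.2.2), z.2.2.1))
      (fun ω => rfl)
      (fun ω => rfl)
  have r17 : ent μ (fun ω => ((fun k : {k // k ∈ T} => Y k.1 ω), X 0 ω, (fun k : {k : Fin N // k ≠ 0} => X k.1 ω), (fun k : {k // k ∈ Tᶜ} => Yhat k.1 ω), Y d ω)) = ent μ (fun ω => (X 0 ω, (((fun k : {k // k ∈ Tᶜ} => X k.1.1 ω), (fun k : {k // k ∈ Tᶜ} => Yhat k.1 ω), Y d ω), ((fun k : {k // k ∈ T} => X k.1.1 ω), (fun k : {k // k ∈ T} => Y k.1 ω))))) :=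
    ent_congr μ _ _
      (fun z => (z.2.1, ((fun k => z.2.2.1 k.1, z.2.2.2.1, z.2.2.2.2), (fun k => z.2.2.1 k.1, z.1))))
      (fun z => (z.2.2.2, z.1, recomb T (fun k => 𝒳 k.1) z.2.2.1 z.2.1.1, z.2.1.2.1, z.2.1.2.2))
      (fun ω => rfl)
      (fun ω => congrArg (fun t => ((fun k : {k // k ∈ T} => Y k.1 ω), X 0 ω, t, (fun k : {k // k ∈ Tᶜ} => Yhat k.1 ω), Y d ω)) (hrX ω))
  have r18 : ent μ (fun ω => ((fun k : {k // k ∈ T} => Yhat k.1 ω), X 0 ω, (fun k : {k : Fin N // k ≠ 0} => X k.1 ω), (fun k : {k // k ∈ Tᶜ} => Yhat k.1 ω), Y d ω)) = ent μ (fun ω => (X 0 ω, (fun k : {k // k ∈ T} => X k.1.1 ω), (fun k : {k // k ∈ Tᶜ} => X k.1.1 ω), (fun k : {k // k ∈ Tᶜ} => Yhat k.1 ω), Y d ω, (fun k : {k // k ∈ T} => Yhat k.1 ω))) :=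
    ent_congr μ _ _
      (fun z => (z.2.1, fun k => z.2.2.1 k.1, fun k => z.2.2.1 k.1, z.2.2.2.1, z.2.2.2.2, z.1))
      (fun z => (z.2.2.2.2.2, z.1, recomb T (fun k => 𝒳 k.1) z.2.1 z.2.2.1, z.2.2.2.1, z.2.2.2.2.1))
      (fun ω => rfl)
      (fun ω => congrArg (fun t => ((fun k : {k // k ∈ T} => Yhat k.1 ω), X 0 ω, t, (fun k : {k // k ∈ Tᶜ} => Yhat k.1 ω), Y d ω)) (hrX ω))
  have r19 : ent μ (fun ω => ((fun k : {k // k ∈ T} => Y k.1 ω), (fun k : {k // k ∈ T} => Yhat k.1 ω), X 0 ω, (fun k : {k : Fin N // k ≠ 0} => X k.1 ω), (fun k : {k // k ∈ Tᶜ} => Yhat k.1 ω), Y d ω)) = ent μ (fun ω => (X 0 ω, (((fun k : {k // k ∈ Tᶜ} => X k.1.1 ω), (fun k : {k // k ∈ Tᶜ} => Yhat k.1 ω), Y d ω), ((fun k : {k // k ∈ T} => X k.1.1 ω), (fun k : {k // k ∈ T} => Y k.1 ω))), (fun k : {k // k ∈ T} => Yhat k.1 ω))) :=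
    ent_congr μ _ _
      (fun z => (z.2.2.1, ((fun k => z.2.2.2.1 k.1, z.2.2.2.2.1, z.2.2.2.2.2), (fun k => z.2.2.2.1 k.1, z.1)), z.2.1))
      (fun z => (z.2.1.2.2, z.2.2, z.1, recomb T (fun k => 𝒳 k.1) z.2.1.2.1 z.2.1.1.1, z.2.1.1.2.1, z.2.1.1.2.2))
      (fun ω => rfl)
      (fun ω => congrArg (fun t => ((fun k : {k // k ∈ T} => Y k.1 ω), (fun k : {k // k ∈ T} => Yhat k.1 ω), X 0 ω, t, (fun k : {k // k ∈ Tᶜ} => Yhat k.1 ω), Y d ω)) (hrX ω))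
  have r20 : ent μ (fun ω => (X 0 ω, (fun k : {k : Fin N // k ≠ 0} => X k.1 ω), (fun k : {k // k ∈ Tᶜ} => Yhat k.1 ω), Y d ω)) = ent μ (fun ω => (X 0 ω, (fun k : {k // k ∈ T} => X k.1.1 ω), (fun k : {k // k ∈ Tᶜ} => X k.1.1 ω), (fun k : {k // k ∈ Tᶜ} => Yhat k.1 ω), Y d ω)) :=
    ent_congr μ _ _
      (fun z => (z.1, fun k => z.2.1 k.1, fun k => z.2.1 k.1, z.2.2.1, z.2.2.2))
      (fun z => (z.1, recomb T (fun k => 𝒳 k.1) z.2.1 z.2.2.1, z.2.2.2.1, z.2.2.2.2))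
      (fun ω => rfl)
      (fun ω => congrArg (fun t => (X 0 ω, t, (fun k : {k // k ∈ Tᶜ} => Yhat k.1 ω), Y d ω)) (hrX ω))
  have r22 : ent μ (fun ω => ((fun k : {k // k ∈ Tᶜ} => Yhat k.1 ω), (fun k : {k // k ∈ Tᶜ} => X k.1.1 ω), Y d ω)) = ent μ (fun ω => ((fun k : {k // k ∈ Tᶜ} => X k.1.1 ω), (fun k : {k // k ∈ Tᶜ} => Yhat k.1 ω), Y d ω)) :=
    ent_congr μ _ _
      (fun z => (z.2.1, z.1, z.2.2))
      (fun z => (z.2.1, z.1, z.2.2))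
      (fun ω => rfl)
      (fun ω => rfl)
  have r23 : ent μ (fun ω => ((fun k : {k // k ∈ T} => X k.1.1 ω), (fun k : {k // k ∈ Tᶜ} => Yhat k.1 ω), (fun k : {k // k ∈ Tᶜ} => X k.1.1 ω), Y d ω)) = ent μ (fun ω => ((fun k : {k // k ∈ T} => X k.1.1 ω), (fun k : {k // k ∈ Tᶜ} => X k.1.1 ω), (fun k : {k // k ∈ Tᶜ} => Yhat k.1 ω), Y d ω)) :=
    ent_congr μ _ _
      (fun z => (z.1, z.2.2.1, z.2.1, z.2.2.2))
      (fun z => (z.1, z.2.2.1, z.2.1, z.2.2.2))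
      (fun ω => rfl)
      (fun ω => rfl)
  have hfact := prob_weak_union μ hμ0 (X 0)
    (fun ω => ((fun k : {k // k ∈ Tᶜ} => X k.1.1 ω), (fun k : {k // k ∈ Tᶜ} => Yhat k.1 ω), Y d ω))
    (fun ω => ((fun k : {k // k ∈ T} => X k.1.1 ω), (fun k : {k // k ∈ T} => Y k.1 ω)))
    (fun ω => (fun k : {k // k ∈ T} => Yhat k.1 ω)) hMarkov
  have key : ent μ (fun ω => (X 0 ω, (((fun k : {k // k ∈ Tᶜ} => X k.1.1 ω), (fun k : {k // k ∈ Tᶜ} => Yhat k.1 ω), Y d ω), ((fun k : {k // k ∈ T} => X k.1.1 ω), (fun k : {k // k ∈ T} => Y k.1 ω))))) + ent μ (fun ω => ((((fun k : {k // k ∈ Tᶜ} => X k.1.1 ω), (fun k : {k // k ∈ Tᶜ} => Yhat k.1 ω), Y d ω), ((fun k : {k // k ∈ T} => X k.1.1 ω), (fun k : {k // k ∈ T} => Y k.1 ω))), (fun k : {k // k ∈ T} => Yhat k.1 ω)))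
      = ent μ (fun ω => (X 0 ω, (((fun k : {k // k ∈ Tᶜ} => X k.1.1 ω), (fun k : {k // k ∈ Tᶜ} => Yhat k.1 ω), Y d ω), ((fun k : {k // k ∈ T} => X k.1.1 ω), (fun k : {k // k ∈ T} => Y k.1 ω))), (fun k : {k // k ∈ T} => Yhat k.1 ω))) + ent μ (fun ω => (((fun k : {k // k ∈ Tᶜ} => X k.1.1 ω), (fun k : {k // k ∈ Tᶜ} => Yhat k.1 ω), Y d ω), ((fun k : {k // k ∈ T} => X k.1.1 ω), (fun k : {k // k ∈ T} => Y k.1 ω)))) :=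
    condIndep_ent μ hμ0 (X 0) (fun ω => (((fun k : {k // k ∈ Tᶜ} => X k.1.1 ω), (fun k : {k // k ∈ Tᶜ} => Yhat k.1 ω), Y d ω), ((fun k : {k // k ∈ T} => X k.1.1 ω), (fun k : {k // k ∈ T} => Y k.1 ω)))) (fun ω => (fun k : {k // k ∈ T} => Yhat k.1 ω)) hfact
  simp only [condMI]
  rw [r1, r2, r3, r4, r6, r7, r9, r10, r11, r12, r13, r14, r15, r17, r18, r19, r20, r22, r23]
  linarith [key]
end

section
/- Consider the 4-node noiseless cascade network with all binary alphabets: Y_2 = X_1, Y_3 = X_2, Y_4 = X_3, where node 1 is the source, node 4 is the only destination, and R_2 = R_3 = R_4 = 0. Then: (a) the capacity is C = 1 bit per channel use, achieved by noisy network coding; and (b) the Kramer–Gastpar–Gupta hybrid lower bound is zero for this network. In particular, for any finite random variables with joint pmf p(x_1) · p(u_2, x_2) · p(u_3, x_3) · p(ŷ_2 | u_2, u_3, x_2, y_2) · p(ŷ_3 | u_2, u_3, x_3, y_3), where Y_2 = X_1, Y_3 = X_2, Y_4 = X_3, the constraint I(Ŷ_2; Y_2 | U_2, U_3, X_2, X_3,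 Ŷ_3, Y_4) + I(Ŷ_2; X_3 | U_2, U_3, X_2) ≤ I(X_2; Y_4 | U_2, U_3, X_3) + I(U_2; Y_4 | U_3) implies I(X_1; Ŷ_2, Ŷ_3, Y_4 | U_2, U_3, X_2, X_3) = 0. -/
/-!
A 4-node binary noiseless cascade network (`Y₂ = X₁`, `Y₃ = X₂`, `Y₄ = X₃`) on which
noisy network coding achieves the capacity `C = 1` bit per channel use, while the
Kramer–Gastpar–Gupta hybrid lower bound is zero.
-/

open scoped BigOperators Classical

namespace NNC

/-- A code for the binary noiseless cascade network `1 → 2 → 3 → 4` in which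
`Y₂ = X₁`, `Y₃ = X₂`, `Y₄ = X₃`, node 1 is the source of the single message, nodes
2, 3 are causal relays, and node 4 is the destination. -/
structure CascadeCode (n M : ℕ) where
  enc1 : Fin M → Fin n → Bool
  enc2 : (i : Fin n) → ((t : Fin i.1) → Bool) → Bool
  enc3 : (i : Fin n) → ((t : Fin i.1) → Bool) → Bool
  dec : (Fin n → Bool) → Fin M

/-- The sequence transmitted by relay node 2 (which receives `Y₂ = X₁`). -/
def x2seq {n M : ℕ} (C : CascadeCode n M) (m : Fin M) : Fin n → Bool :=
  fun i => C.enc2 i (fun t => C.enc1 m ⟨t.1, t.2.trans i.2⟩)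

/-- The sequence received by the destination node 4 (namely `X₃`, where node 3
receives `Y₃ = X₂`). -/
def y4seq {n M : ℕ} (C : CascadeCode n M) (m : Fin M) : Fin n → Bool :=
  fun i => C.enc3 i (fun t => x2seq C m ⟨t.1, t.2.trans i.2⟩)

/-- Achievability of the rate `R` for the binary cascade network (with
`R₂ = R₃ = R₄ = 0`, i.e. only the source message). -/
def CascadeAchievable (R : ℝ) : Prop :=
  ∀ ε : ℝ, 0 < ε → ∃ n : ℕ, 0 < n ∧ ∃ M : ℕ, 0 < M ∧ ∃ C : CascadeCode n M,
    (2 : ℝ) ^ ((n : ℝ) * (R - ε)) ≤ (M : ℝ) ∧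
    ((Finset.univ.filter fun m : Fin M => C.dec (y4seq C m) ≠ m).card : ℝ)
      ≤ ε * M

end NNC


namespace NNCproof
open NNC

variable {Ω : Type*} [Fintype Ω]

lemma prob_nonneg {β : Type*} {μ : Ω → ℝ} (hμ : ∀ ω, 0 ≤ μ ω) (X : Ω → β) (b : β) :
    0 ≤ prob μ X b := by
  refine Finset.sum_nonneg fun ω _ => ?_
  split <;> simp [hμ ω]

lemma sum_prob {β : Type*} [Fintype β] (μ : Ω → ℝ) (X : Ω → β) :
    ∑ b, prob μ X b = ∑ ω, μ ω := by
  unfold prob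
  rw [Finset.sum_comm]
  simp

lemma prob_comp_inj {β γ : Type*} (μ : Ω → ℝ) (T : Ω → β) (g : β → γ)
    (hg : Function.Injective g) (b : β) :
    prob μ (fun ω => g (T ω)) (g b) = prob μ T b := by
  unfold prob
  refine Finset.sum_congr rfl fun ω _ => ?_
  simp [hg.eq_iff]

lemma prob_fst {α β : Type*} [Fintype β] (μ : Ω → ℝ) (X : Ω → α) (Y : Ω → β) (a : α) :
    prob μ X a = ∑ b, prob μ (fun ω => (X ω, Y ω)) (a, b) := by
  unfold prob
  rw [Finset.sum_comm]
  refine Finset.sum_congr rfl fun ω _ => ?_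
  by_cases h : X ω = a <;> simp [h, Prod.ext_iff]

lemma prob_snd {α β : Type*} [Fintype α] (μ : Ω → ℝ) (X : Ω → α) (Y : Ω → β) (b : β) :
    prob μ Y b = ∑ a, prob μ (fun ω => (X ω, Y ω)) (a, b) := by
  unfold prob
  rw [Finset.sum_comm]
  refine Finset.sum_congr rfl fun ω _ => ?_
  by_cases h : Y ω = b <;> simp [h, Prod.ext_iff]

lemma ent_comp_inj {β γ : Type*} [Fintype β] [Fintype γ] (μ : Ω → ℝ) (X : Ω → β)
    (g : β → γ) (hg : Function.Injective g) :
    ent μ (fun ω => g (X ω)) = ent μ X := by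
  unfold ent
  congr 1
  calc ∑ c : γ, prob μ (fun ω => g (X ω)) c * Real.logb 2 (prob μ (fun ω => g (X ω)) c)
      = ∑ c ∈ Finset.univ.image g, prob μ (fun ω => g (X ω)) c
          * Real.logb 2 (prob μ (fun ω => g (X ω)) c) := by
        refine (Finset.sum_subset (Finset.subset_univ _) ?_).symm
        intro c _ hc
        have : prob μ (fun ω => g (X ω)) c = 0 := by
          unfold prob
          refine Finset.sum_eq_zero fun ω _ => ?_
          rw [if_neg]
          intro h
          exact hc (Finset.mem_image.2 ⟨X ω, Finset.mem_univ _, h⟩)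
        simp [this]
    _ = ∑ b : β, prob μ (fun ω => g (X ω)) (g b)
          * Real.logb 2 (prob μ (fun ω => g (X ω)) (g b)) :=
        Finset.sum_image (fun x _ y _ h => hg h)
    _ = ∑ b : β, prob μ X b * Real.logb 2 (prob μ X b) := by
        refine Finset.sum_congr rfl fun b _ => by rw [prob_comp_inj μ X g hg]

lemma ent_pair_of_indep {α β : Type*} [Fintype α] [Fintype β] (μ : Ω → ℝ)
    (X : Ω → α) (Y : Ω → β) (hsum : ∑ ω, μ ω = 1)
    (hfac : ∀ a b, prob μ (fun ω => (X ω, Y ω)) (a, b) = prob μ X a * prob μ Y b) :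
    ent μ (fun ω => (X ω, Y ω)) = ent μ X + ent μ Y := by
  have hX : ∑ a, prob μ X a = 1 := (sum_prob μ X).trans hsum
  have hY : ∑ b, prob μ Y b = 1 := (sum_prob μ Y).trans hsum
  unfold ent
  rw [Fintype.sum_prod_type]
  have key : ∀ a b, prob μ (fun ω => (X ω, Y ω)) (a, b)
      * Real.logb 2 (prob μ (fun ω => (X ω, Y ω)) (a, b))
      = prob μ Y b * (prob μ X a * Real.logb 2 (prob μ X a))
        + prob μ X a * (prob μ Y b * Real.logb 2 (prob μ Y b)) := by
    intro a b
    rw [hfac]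
    by_cases h1 : prob μ X a = 0
    · simp [h1]
    by_cases h2 : prob μ Y b = 0
    · simp [h2]
    rw [Real.logb, Real.log_mul h1 h2]
    rw [Real.logb, Real.logb]
    ring
  have hrow : ∀ a : α, ∑ b : β, prob μ (fun ω => (X ω, Y ω)) (a, b)
      * Real.logb 2 (prob μ (fun ω => (X ω, Y ω)) (a, b))
      = (prob μ X a * Real.logb 2 (prob μ X a))
        + prob μ X a * ∑ b, (prob μ Y b * Real.logb 2 (prob μ Y b)) := by
    intro a
    simp only [key]
    rw [Finset.sum_add_distrib, ← Finset.sum_mul, hY, ← Finset.mul_sum]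
    ring
  simp only [hrow]
  rw [Finset.sum_add_distrib, ← Finset.sum_mul, hX]
  ring

variable {α β γ : Type*} [Fintype α] [Fintype β] [Fintype γ]

lemma sum_comm3 {M : Type*} [AddCommMonoid M] (f : α → β → γ → M) :
    ∑ a, ∑ b, ∑ c, f a b c = ∑ c, ∑ a, ∑ b, f a b c := by
  have h1 : ∀ a : α, ∑ b, ∑ c, f a b c = ∑ c, ∑ b, f a b c := fun a => Finset.sum_comm
  simp only [h1]
  exact Finset.sum_comm

lemma core (p : α → β → γ → ℝ) (hp : ∀ a b c, 0 ≤ p a b c)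
    (hsum : ∑ a, ∑ b, ∑ c, p a b c = 1) :
    ∑ a, ∑ b, ∑ c, p a b c *
        (Real.log (∑ b', p a b' c) + Real.log (∑ a', p a' b c)
          - Real.log (p a b c) - Real.log (∑ a', ∑ b', p a' b' c)) ≤ 0 := by
  classical
  set pxz : α → γ → ℝ := fun a c => ∑ b', p a b' c with hpxz
  set pyz : β → γ → ℝ := fun b c => ∑ a', p a' b c with hpyz
  set pz : γ → ℝ := fun c => ∑ a', ∑ b', p a' b' c with hpz
  have hpxznn : ∀ a c, 0 ≤ pxz a c := fun a c => Finset.sum_nonneg fun _ _ => hp _ _ _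
  have hpyznn : ∀ b c, 0 ≤ pyz b c := fun b c => Finset.sum_nonneg fun _ _ => hp _ _ _
  have hpznn : ∀ c, 0 ≤ pz c := fun c =>
    Finset.sum_nonneg fun _ _ => Finset.sum_nonneg fun _ _ => hp _ _ _
  set f : α × β × γ → ℝ := fun t => p t.1 t.2.1 t.2.2 *
      (Real.log (pxz t.1 t.2.2) + Real.log (pyz t.2.1 t.2.2)
        - Real.log (p t.1 t.2.1 t.2.2) - Real.log (pz t.2.2)) with hf
  have huncurry : ∑ a, ∑ b, ∑ c, p a b c *
        (Real.log (pxz a c) + Real.log (pyz b c)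
          - Real.log (p a b c) - Real.log (pz c)) = ∑ t, f t := by
    rw [Fintype.sum_prod_type, ]
    exact Finset.sum_congr rfl fun a _ => by rw [Fintype.sum_prod_type]
  rw [huncurry]
  set supp : Finset (α × β × γ) := Finset.univ.filter (fun t => 0 < p t.1 t.2.1 t.2.2)
  have hsupp : ∑ t, f t = ∑ t ∈ supp, f t := by
    refine (Finset.sum_subset (Finset.filter_subset _ _) ?_).symm
    intro t _ ht
    have : p t.1 t.2.1 t.2.2 = 0 := by
      by_contra h
      exact ht (Finset.mem_filter.2 ⟨Finset.mem_univ _, lt_of_le_of_ne (hp _ _ _) (Ne.symm h)⟩)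
    simp [hf, this]
  rw [hsupp]
  have hterm : ∀ t ∈ supp, f t ≤ pxz t.1 t.2.2 * pyz t.2.1 t.2.2 / pz t.2.2 - p t.1 t.2.1 t.2.2 := by
    rintro ⟨a, b, c⟩ ht
    have hpt : 0 < p a b c := (Finset.mem_filter.1 ht).2
    have hx : 0 < pxz a c := lt_of_lt_of_le hpt
      (Finset.single_le_sum (f := fun b' => p a b' c) (fun _ _ => hp _ _ _) (Finset.mem_univ b))
    have hy : 0 < pyz b c := lt_of_lt_of_le hpt
      (Finset.single_le_sum (f := fun a' => p a' b c) (fun _ _ => hp _ _ _) (Finset.mem_univ a))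
    have hzc : 0 < pz c := lt_of_lt_of_le hx
      (Finset.single_le_sum (f := fun a' => pxz a' c) (fun _ _ => hpxznn _ _) (Finset.mem_univ a))
    have hratio : 0 < pxz a c * pyz b c / (p a b c * pz c) := by positivity
    have hlog : Real.log (pxz a c) + Real.log (pyz b c) - Real.log (p a b c) - Real.log (pz c)
        = Real.log (pxz a c * pyz b c / (p a b c * pz c)) := by
      rw [Real.log_div (by positivity) (by positivity), Real.log_mul hx.ne' hy.ne',
        Real.log_mul hpt.ne' hzc.ne']
      ring
    show p a b c * _ ≤ _
    rw [hlog]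
    calc p a b c * Real.log (pxz a c * pyz b c / (p a b c * pz c))
        ≤ p a b c * (pxz a c * pyz b c / (p a b c * pz c) - 1) :=
          mul_le_mul_of_nonneg_left (Real.log_le_sub_one_of_pos hratio) hpt.le
      _ = pxz a c * pyz b c / pz c - p a b c := by
          field_simp
  have hsum_supp_p : ∑ t ∈ supp, p t.1 t.2.1 t.2.2 = 1 := by
    have h1 : ∑ t ∈ supp, p t.1 t.2.1 t.2.2 = ∑ t : α × β × γ, p t.1 t.2.1 t.2.2 :=
      Finset.sum_subset (Finset.filter_subset _ _) (fun t _ ht => by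
        by_contra h
        exact ht (Finset.mem_filter.2 ⟨Finset.mem_univ _,
          lt_of_le_of_ne (hp _ _ _) (Ne.symm h)⟩))
    rw [h1]
    simp only [Fintype.sum_prod_type]
    exact hsum
  have hub : ∑ t ∈ supp, (pxz t.1 t.2.2 * pyz t.2.1 t.2.2 / pz t.2.2 - p t.1 t.2.1 t.2.2) ≤ 0 := by
    rw [Finset.sum_sub_distrib, hsum_supp_p]
    have h2 : ∑ t ∈ supp, pxz t.1 t.2.2 * pyz t.2.1 t.2.2 / pz t.2.2
        ≤ ∑ t ∈ Finset.univ.filter (fun t : α × β × γ => 0 < pz t.2.2),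
            pxz t.1 t.2.2 * pyz t.2.1 t.2.2 / pz t.2.2 := by
      refine Finset.sum_le_sum_of_subset_of_nonneg ?_ ?_
      · intro t ht
        have hpt : 0 < p t.1 t.2.1 t.2.2 := (Finset.mem_filter.1 ht).2
        refine Finset.mem_filter.2 ⟨Finset.mem_univ _, ?_⟩
        calc 0 < p t.1 t.2.1 t.2.2 := hpt
          _ ≤ pxz t.1 t.2.2 :=
            Finset.single_le_sum (f := fun b' => p t.1 b' t.2.2) (fun _ _ => hp _ _ _)
              (Finset.mem_univ _)
          _ ≤ pz t.2.2 :=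
            Finset.single_le_sum (f := fun a' => pxz a' t.2.2) (fun _ _ => hpxznn _ _)
              (Finset.mem_univ _)
      · intro t _ _
        have := hpxznn t.1 t.2.2
        have := hpyznn t.2.1 t.2.2
        have := hpznn t.2.2
        positivity
    have h3 : ∑ t ∈ Finset.univ.filter (fun t : α × β × γ => 0 < pz t.2.2),
        pxz t.1 t.2.2 * pyz t.2.1 t.2.2 / pz t.2.2 ≤ 1 := by
      rw [Finset.sum_filter]
      simp only [Fintype.sum_prod_type]
      have hc : ∀ c : γ, (∑ a, ∑ b, if 0 < pz c then pxz a c * pyz b c / pz c else 0)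
          = if 0 < pz c then pz c else 0 := by
        intro c
        by_cases h : 0 < pz c
        · simp only [if_pos h]
          have hrow : ∀ a, ∑ b, pxz a c * pyz b c / pz c = pxz a c * pz c / pz c := by
            intro a
            rw [← Finset.sum_div, ← Finset.mul_sum]
            congr 2
            rw [hpz]
            exact Finset.sum_comm
          simp only [hrow]
          rw [← Finset.sum_div, ← Finset.sum_mul]
          rw [show (∑ a, pxz a c) = pz c from rfl]
          field_simp
        · simp [if_neg h]
      calc (∑ a, ∑ b, ∑ c, if 0 < pz c then pxz a c * pyz b c / pz c else 0)
          = ∑ c, ∑ a, ∑ b, (if 0 < pz c then pxz a c * pyz b c / pz c else 0) :=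
            sum_comm3 _
        _ = ∑ c, if 0 < pz c then pz c else 0 :=
            Finset.sum_congr rfl fun c _ => hc c
        _ ≤ ∑ c, pz c := by
            refine Finset.sum_le_sum fun c _ => ?_
            split
            · exact le_refl _
            · exact hpznn c
        _ = 1 := by
            rw [← hsum]
            exact (sum_comm3 p).symm
    linarith
  calc ∑ t ∈ supp, f t
      ≤ ∑ t ∈ supp, (pxz t.1 t.2.2 * pyz t.2.1 t.2.2 / pz t.2.2 - p t.1 t.2.1 t.2.2) :=
        Finset.sum_le_sum hterm
    _ ≤ 0 := hub

lemma sum3_logb_mul (f g : α → β → γ → ℝ) :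
    (∑ a, ∑ b, ∑ c, f a b c * Real.logb 2 (g a b c)) * Real.log 2
      = ∑ a, ∑ b, ∑ c, f a b c * Real.log (g a b c) := by
  have hl : Real.log 2 ≠ 0 := ne_of_gt (Real.log_pos one_lt_two)
  rw [Finset.sum_mul]
  refine Finset.sum_congr rfl fun a _ => ?_
  rw [Finset.sum_mul]
  refine Finset.sum_congr rfl fun b _ => ?_
  rw [Finset.sum_mul]
  refine Finset.sum_congr rfl fun c _ => ?_
  rw [Real.logb, mul_assoc, div_mul_cancel₀ _ hl]

lemma condMI_nonneg (μ : Ω → ℝ) (hμ : ∀ ω, 0 ≤ μ ω)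
    (hsum : ∑ ω, μ ω = 1) (X : Ω → α) (Y : Ω → β) (Z : Ω → γ) :
    0 ≤ condMI μ X Y Z := by
  classical
  have hlog2 : (0:ℝ) < Real.log 2 := Real.log_pos one_lt_two
  set W : Ω → α × β × γ := fun ω => (X ω, Y ω, Z ω) with hW
  have hxz : ∀ a c, prob μ (fun ω => (X ω, Z ω)) (a, c) = ∑ b, prob μ W (a, b, c) := by
    intro a c
    unfold prob
    rw [Finset.sum_comm]
    refine Finset.sum_congr rfl fun ω _ => ?_
    by_cases h1 : X ω = a <;> by_cases h2 : Z ω = c <;>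
      simp [hW, h1, h2, Prod.ext_iff]
  have hyz : ∀ b c, prob μ (fun ω => (Y ω, Z ω)) (b, c) = ∑ a, prob μ W (a, b, c) := by
    intro b c
    unfold prob
    rw [Finset.sum_comm]
    refine Finset.sum_congr rfl fun ω _ => ?_
    by_cases h1 : Y ω = b <;> by_cases h2 : Z ω = c <;>
      simp [hW, h1, h2, Prod.ext_iff]
  have hz : ∀ c, prob μ Z c = ∑ a, ∑ b, prob μ W (a, b, c) := by
    intro c
    have h1 : ∀ ω, (∑ a, ∑ b, if W ω = (a, b, c) then μ ω else 0)
        = if Z ω = c then μ ω else 0 := by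
      intro ω
      have hx : ∀ a, (∑ b, if W ω = (a, b, c) then μ ω else 0)
          = if X ω = a ∧ Z ω = c then μ ω else 0 := by
        intro a
        by_cases hxa : X ω = a
        · by_cases hzc : Z ω = c <;> simp [hW, hxa, hzc, Prod.ext_iff]
        · simp [hW, hxa, Prod.ext_iff]
      simp only [hx]
      by_cases h2 : Z ω = c <;> simp [h2]
    calc prob μ Z c = ∑ ω, if Z ω = c then μ ω else 0 := rfl
      _ = ∑ ω, ∑ a, ∑ b, if W ω = (a, b, c) then μ ω else 0 :=
          Finset.sum_congr rfl fun ω _ => (h1 ω).symm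
      _ = ∑ a, ∑ b, ∑ ω, if W ω = (a, b, c) then μ ω else 0 :=
          (sum_comm3 (fun a b ω => if W ω = (a, b, c) then μ ω else 0)).symm
      _ = ∑ a, ∑ b, prob μ W (a, b, c) := by unfold prob; congr!
  have hsum1 : ∑ a, ∑ b, ∑ c, prob μ W (a, b, c) = 1 := by
    have : ∑ t : α × β × γ, prob μ W t = 1 := (sum_prob μ W).trans hsum
    rw [← this]
    simp only [Fintype.sum_prod_type]
  have hpnn : ∀ a b c, 0 ≤ prob μ W (a, b, c) := fun a b c => prob_nonneg hμ W _
  have hcore := core (fun a b c => prob μ W (a, b, c)) hpnn hsum1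
  have e3 : ent μ W = -∑ a, ∑ b, ∑ c, prob μ W (a, b, c) * Real.logb 2 (prob μ W (a, b, c)) := by
    unfold ent
    simp only [Fintype.sum_prod_type]
  have e1 : ent μ (fun ω => (X ω, Z ω))
      = -∑ a, ∑ b, ∑ c, prob μ W (a, b, c) * Real.logb 2 (∑ b', prob μ W (a, b', c)) := by
    unfold ent
    rw [Fintype.sum_prod_type]
    congr 1
    refine Finset.sum_congr rfl fun a _ => ?_
    calc ∑ c, prob μ (fun ω => (X ω, Z ω)) (a, c)
            * Real.logb 2 (prob μ (fun ω => (X ω, Z ω)) (a, c))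
        = ∑ c, ∑ b, prob μ W (a, b, c) * Real.logb 2 (∑ b', prob μ W (a, b', c)) := by
          refine Finset.sum_congr rfl fun c _ => ?_
          rw [hxz a c, Finset.sum_mul]
      _ = ∑ b, ∑ c, prob μ W (a, b, c) * Real.logb 2 (∑ b', prob μ W (a, b', c)) :=
          Finset.sum_comm
  have e2 : ent μ (fun ω => (Y ω, Z ω))
      = -∑ a, ∑ b, ∑ c, prob μ W (a, b, c) * Real.logb 2 (∑ a', prob μ W (a', b, c)) := by
    unfold ent
    rw [Fintype.sum_prod_type]
    congr 1
    calc ∑ b, ∑ c, prob μ (fun ω => (Y ω, Z ω)) (b, c)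
            * Real.logb 2 (prob μ (fun ω => (Y ω, Z ω)) (b, c))
        = ∑ b, ∑ c, ∑ a, prob μ W (a, b, c) * Real.logb 2 (∑ a', prob μ W (a', b, c)) := by
          refine Finset.sum_congr rfl fun b _ => Finset.sum_congr rfl fun c _ => ?_
          rw [hyz b c, Finset.sum_mul]
      _ = ∑ a, ∑ b, ∑ c, prob μ W (a, b, c) * Real.logb 2 (∑ a', prob μ W (a', b, c)) :=
          sum_comm3 _
  have e4 : ent μ Z
      = -∑ a, ∑ b, ∑ c, prob μ W (a, b, c)
          * Real.logb 2 (∑ a', ∑ b', prob μ W (a', b', c)) := by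
    unfold ent
    congr 1
    calc ∑ c, prob μ Z c * Real.logb 2 (prob μ Z c)
        = ∑ c, ∑ a, ∑ b, prob μ W (a, b, c)
            * Real.logb 2 (∑ a', ∑ b', prob μ W (a', b', c)) := by
          refine Finset.sum_congr rfl fun c _ => ?_
          rw [hz c, Finset.sum_mul]
          exact Finset.sum_congr rfl fun a _ => by rw [Finset.sum_mul]
      _ = ∑ a, ∑ b, ∑ c, prob μ W (a, b, c)
            * Real.logb 2 (∑ a', ∑ b', prob μ W (a', b', c)) := (sum_comm3 _).symm
  set T1 := ∑ a, ∑ b, ∑ c, prob μ W (a, b, c) * Real.log (∑ b', prob μ W (a, b', c)) with hT1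
  set T2 := ∑ a, ∑ b, ∑ c, prob μ W (a, b, c) * Real.log (∑ a', prob μ W (a', b, c)) with hT2
  set T3 := ∑ a, ∑ b, ∑ c, prob μ W (a, b, c) * Real.log (prob μ W (a, b, c)) with hT3
  set T4 := ∑ a, ∑ b, ∑ c, prob μ W (a, b, c)
      * Real.log (∑ a', ∑ b', prob μ W (a', b', c)) with hT4
  have hdist : ∑ a, ∑ b, ∑ c, prob μ W (a, b, c) *
        (Real.log (∑ b', prob μ W (a, b', c)) + Real.log (∑ a', prob μ W (a', b, c))
          - Real.log (prob μ W (a, b, c))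
          - Real.log (∑ a', ∑ b', prob μ W (a', b', c)))
      = T1 + T2 - T3 - T4 := by
    rw [hT1, hT2, hT3, hT4]
    simp only [mul_add, mul_sub, Finset.sum_add_distrib, Finset.sum_sub_distrib]
  have hent : condMI μ X Y Z * Real.log 2 = T3 + T4 - T1 - T2 := by
    rw [condMI, e1, e2, e3, e4]
    have expand : ∀ s1 s2 s3 s4 l : ℝ,
        (-s1 + -s2 - -s3 - -s4) * l = s3 * l + s4 * l - s1 * l - s2 * l := by
      intros; ring
    rw [expand, sum3_logb_mul, sum3_logb_mul,
      sum3_logb_mul (fun a b c => prob μ W (a, b, c)) (fun a b c => ∑ b', prob μ W (a, b', c)),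
      sum3_logb_mul (fun a b c => prob μ W (a, b, c)) (fun a b c => ∑ a', prob μ W (a', b, c))]
  have h0 : 0 ≤ condMI μ X Y Z * Real.log 2 := by
    rw [hent]
    rw [hdist] at hcore
    linarith
  nlinarith [h0, hlog2]

lemma bits_sum : ∀ k m : ℕ, m < 2 ^ k →
    (∑ i ∈ Finset.range k, if Nat.testBit m i then 2 ^ i else 0) = m := by
  intro k
  induction k with
  | zero => intro m hm; interval_cases m <;> simp
  | succ k ih =>
    intro m hm
    rw [Finset.sum_range_succ]
    have h1 : (∑ i ∈ Finset.range k, if Nat.testBit m i then 2 ^ i else 0)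
        = m % 2 ^ k := by
      rw [← ih (m % 2 ^ k) (Nat.mod_lt _ (Nat.pow_pos (n := k) (by norm_num)))]
      refine Finset.sum_congr rfl fun i hi => ?_
      rw [Nat.testBit_mod_two_pow]
      simp [Finset.mem_range.1 hi]
    rw [h1, Nat.testBit_eq_decide_div_mod_eq]
    have hdm := Nat.div_add_mod m (2 ^ k)
    have hq : m / 2 ^ k < 2 := by
      apply Nat.div_lt_of_lt_mul
      rw [pow_succ] at hm
      omega
    by_cases h : m / 2 ^ k % 2 = 1
    · rw [if_pos (by simpa using h)]
      have h2 : m / 2 ^ k = 1 := by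
        interval_cases h0 : m / 2 ^ k
        · simp at h
        · rfl
      rw [h2, mul_one] at hdm
      omega
    · rw [if_neg (by simpa using h)]
      have h2 : m / 2 ^ k = 0 := by
        interval_cases h0 : m / 2 ^ k
        · rfl
        · simp at h
      rw [h2, mul_zero] at hdm
      omega

noncomputable def idCode (n : ℕ) : CascadeCode n (2 ^ (n - 2)) where
  enc1 m i := (m : ℕ).testBit i.1
  enc2 i past := if h : 0 < i.1 then past ⟨i.1 - 1, by omega⟩ else false
  enc3 i past := if h : 0 < i.1 then past ⟨i.1 - 1, by omega⟩ else false
  dec y := ⟨(∑ i ∈ Finset.range (n - 2),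
      if h : i + 2 < n then (if y ⟨i + 2, h⟩ then 2 ^ i else 0) else 0) % 2 ^ (n - 2),
    Nat.mod_lt _ (Nat.pow_pos (by norm_num))⟩

lemma idCode_y4 (n : ℕ) (m : Fin (2 ^ (n - 2))) (i : Fin n) (hi : 2 ≤ i.1) :
    y4seq (idCode n) m i = (m : ℕ).testBit (i.1 - 2) := by
  have h1 : 0 < i.1 := by omega
  show (idCode n).enc3 i _ = _
  unfold idCode
  simp only [dif_pos h1]
  show x2seq (idCode n) m ⟨i.1 - 1, by omega⟩ = _
  have h2 : 0 < i.1 - 1 := by omega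
  show (idCode n).enc2 _ _ = _
  unfold idCode
  simp only [dif_pos h2]
  rfl

lemma idCode_correct (n : ℕ) (hn : 3 ≤ n) (m : Fin (2 ^ (n - 2))) :
    (idCode n).dec (y4seq (idCode n) m) = m := by
  have hlt : (m : ℕ) < 2 ^ (n - 2) := m.2
  apply Fin.ext
  show (∑ i ∈ Finset.range (n - 2),
      if h : i + 2 < n then (if y4seq (idCode n) m ⟨i + 2, h⟩ then 2 ^ i else 0) else 0)
        % 2 ^ (n - 2) = (m : ℕ)
  have h1 : ∀ i ∈ Finset.range (n - 2),
      (if h : i + 2 < n then (if y4seq (idCode n) m ⟨i + 2, h⟩ then 2 ^ i else 0) else 0)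
      = if Nat.testBit (m : ℕ) i then 2 ^ i else 0 := by
    intro i hi
    have hin : i + 2 < n := by have := Finset.mem_range.1 hi; omega
    rw [dif_pos hin, idCode_y4 n m ⟨i + 2, hin⟩ (by simp)]
    simp
  rw [Finset.sum_congr rfl h1, bits_sum _ _ hlt, Nat.mod_eq_of_lt hlt]

def y4aux {n M : ℕ} (C : CascadeCode n M) (b : Fin (n - 2) → Bool) : Fin n → Bool :=
  fun i => C.enc3 i (fun t => C.enc2 ⟨t.1, t.2.trans i.2⟩
    (fun s => if h : s.1 < n - 2 then b ⟨s.1, h⟩ else false))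

lemma y4seq_eq_aux {n M : ℕ} (C : CascadeCode n M) (m : Fin M) :
    y4seq C m = y4aux C (fun t => C.enc1 m ⟨t.1, lt_of_lt_of_le t.2 (Nat.sub_le n 2)⟩) := by
  funext i
  unfold y4seq y4aux
  congr 1
  funext t
  unfold x2seq
  congr 1
  funext s
  have hs : s.1 < t.1 := s.2
  have ht : t.1 < i.1 := t.2
  have hi : i.1 < n := i.2
  rw [dif_pos (by omega : s.1 < n - 2)]

lemma achievable_one : CascadeAchievable 1 := by
  intro ε hε
  set n : ℕ := ⌈(2:ℝ)/ε⌉₊ + 3 with hn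
  have hn3 : 3 ≤ n := by omega
  have hnε : 2 ≤ (n : ℝ) * ε := by
    have h1 : (2:ℝ)/ε ≤ ⌈(2:ℝ)/ε⌉₊ := Nat.le_ceil _
    have h2 : ((⌈(2:ℝ)/ε⌉₊ : ℝ) + 3) = (n : ℝ) := by rw [hn]; push_cast; ring
    have h3 : (2:ℝ)/ε ≤ (n:ℝ) := by linarith
    calc (2:ℝ) = (2/ε) * ε := by field_simp
      _ ≤ (n:ℝ) * ε := by nlinarith
  refine ⟨n, by omega, 2 ^ (n - 2), Nat.pow_pos (by norm_num), idCode n, ?_, ?_⟩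
  · have h1 : (n:ℝ) * (1 - ε) ≤ (n:ℝ) - 2 := by nlinarith
    calc (2:ℝ) ^ ((n:ℝ) * (1 - ε)) ≤ (2:ℝ) ^ ((n:ℝ) - 2) :=
          Real.rpow_le_rpow_of_exponent_le one_le_two h1
      _ = ((2 ^ (n - 2) : ℕ) : ℝ) := by
          have hc : ((n - 2 : ℕ) : ℝ) = (n:ℝ) - 2 := by
            push_cast [Nat.cast_sub (by omega : 2 ≤ n)]
            ring
          rw [← hc, Real.rpow_natCast]
          push_cast
          ring
  · have hempty : (Finset.univ.filter
        fun m : Fin (2 ^ (n - 2)) => (idCode n).dec (y4seq (idCode n) m) ≠ m) = ∅ := by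
      refine Finset.filter_eq_empty_iff.2 fun m _ => ?_
      simp [idCode_correct n hn3 m]
    rw [hempty]
    simp only [Finset.card_empty, Nat.cast_zero]
    positivity

lemma rate_le_one (R : ℝ) (h : CascadeAchievable R) : R ≤ 1 := by
  by_contra hR
  push_neg at hR
  set ε : ℝ := min ((R - 1) / 2) (1/3) with hεdef
  have hε : 0 < ε := lt_min (by linarith) (by norm_num)
  have hε3 : ε ≤ 1/3 := min_le_right _ _
  have hε2 : ε ≤ (R - 1)/2 := min_le_left _ _
  obtain ⟨n, hn, M, hM, C, hrate, herr⟩ := h ε hε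
  set G := Finset.univ.filter fun m : Fin M => C.dec (y4seq C m) = m with hG
  have hcard : G.card + (Finset.univ.filter
      fun m : Fin M => C.dec (y4seq C m) ≠ m).card = M := by
    rw [hG]
    rw [Finset.card_filter_add_card_filter_not]
    exact Finset.card_univ.trans (Fintype.card_fin M)
  have hGlb : (M:ℝ) - ε * M ≤ G.card := by
    have herr' := herr
    have h2 : ((Finset.univ.filter fun m : Fin M => C.dec (y4seq C m) ≠ m).card : ℝ)
        = (M : ℝ) - G.card := by
      have := hcard
      push_cast [← this]
      ring
    rw [h2] at herr'
    linarith
  have hGub : G.card ≤ 2 ^ (n - 2) := by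
    have hinj : Set.InjOn (fun m => fun t : Fin (n - 2) =>
        C.enc1 m ⟨t.1, lt_of_lt_of_le t.2 (Nat.sub_le n 2)⟩) ↑G := by
      intro m hm m' hm' hmm
      have h1 : y4seq C m = y4seq C m' := by
        rw [y4seq_eq_aux C m, y4seq_eq_aux C m']
        exact congrArg (y4aux C) hmm
      have h2 : C.dec (y4seq C m) = m := (Finset.mem_filter.1 hm).2
      have h3 : C.dec (y4seq C m') = m' := (Finset.mem_filter.1 hm').2
      rw [← h2, ← h3, h1]
    calc G.card ≤ (Finset.univ : Finset (Fin (n - 2) → Bool)).card :=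
        Finset.card_le_card_of_injOn _ (fun a _ => Finset.mem_univ _) hinj
      _ = 2 ^ (n - 2) := by simp [Finset.card_univ]
  have hKub : ((2 ^ (n - 2) : ℕ) : ℝ) ≤ (2:ℝ) ^ ((n:ℝ) - 1) := by
    have hc1 : ((2 ^ (n - 2) : ℕ) : ℝ) = (2:ℝ) ^ (((n - 2 : ℕ) : ℕ) : ℝ) := by
      rw [Real.rpow_natCast]
      push_cast
      ring
    have hc2 : (((n - 2 : ℕ) : ℕ) : ℝ) ≤ (n:ℝ) - 1 := by
      calc (((n - 2 : ℕ) : ℕ) : ℝ) ≤ ((n - 1 : ℕ) : ℝ) := Nat.cast_le.mpr (by omega)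
        _ = (n:ℝ) - 1 := by
          push_cast [Nat.cast_sub (by omega : 1 ≤ n)]
          ring
    rw [hc1]
    exact Real.rpow_le_rpow_of_exponent_le one_le_two hc2
  have hchain : (1 - ε) * (2:ℝ) ^ ((n:ℝ) * (R - ε)) ≤ (2:ℝ) ^ ((n:ℝ) - 1) := by
    have h1 : (1 - ε) * (2:ℝ) ^ ((n:ℝ) * (R - ε)) ≤ (1 - ε) * (M:ℝ) := by
      have : (0:ℝ) ≤ 1 - ε := by linarith
      nlinarith
    have h2 : (1 - ε) * (M:ℝ) ≤ G.card := by nlinarith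
    have h3 : (G.card : ℝ) ≤ ((2 ^ (n - 2) : ℕ) : ℝ) := by exact_mod_cast hGub
    linarith
  have h4 : (2:ℝ) ^ ((n:ℝ) * (R - ε)) ≤ (2:ℝ) ^ ((n:ℝ)) := by
    have hp : (0:ℝ) < (2:ℝ) ^ ((n:ℝ) * (R - ε)) := Real.rpow_pos_of_pos (by norm_num) _
    have h5 : (2:ℝ) ^ ((n:ℝ) - 1) * 2 = (2:ℝ) ^ ((n:ℝ)) := by
      rw [← Real.rpow_add_one (by norm_num : (2:ℝ) ≠ 0)]
      ring_nf
    nlinarith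
  have h6 : (n:ℝ) * (R - ε) ≤ (n:ℝ) := (Real.rpow_le_rpow_left_iff (by norm_num)).1 h4
  have hn1 : (1:ℝ) ≤ (n:ℝ) := by exact_mod_cast hn
  nlinarith

end NNCproof

open NNC

/-- **A cascade network separating noisy network coding from the KGG hybrid scheme.**
(a) The capacity of the binary noiseless cascade network `Y₂ = X₁`, `Y₃ = X₂`,
`Y₄ = X₃` with source node 1, destination node 4 and `R₂ = R₃ = R₄ = 0` equals `1` bit
per channel use (and is achieved by noisy network coding).
(b) The Kramer–Gastpar–Gupta hybrid bound is zero on this network: for any finite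
random variables with joint pmf
`p(x₁) p(u₂,x₂) p(u₃,x₃) p(ŷ₂|u₂,u₃,x₂,y₂) p(ŷ₃|u₂,u₃,x₃,y₃)` (where `Y₂ = X₁`,
`Y₃ = X₂`, `Y₄ = X₃`), the hybrid-scheme constraint for `𝒯 = {2}`, `r(1) = 4`,
`I(Ŷ₂; Y₂ | U₂,U₃,X₂,X₃,Ŷ₃,Y₄) + I(Ŷ₂; X₃ | U₂,U₃,X₂)
   ≤ I(X₂; Y₄ | U₂,U₃,X₃) + I(U₂; Y₄ | U₃)`,
forces the hybrid rate `I(X₁; Ŷ₂,Ŷ₃,Y₄ | U₂,U₃,X₂,X₃)` to vanish. -/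
theorem cascade_nnc_vs_hybrid :
    sSup {R : ℝ | CascadeAchievable R} = 1 ∧
    (∀ (Ω AU2 AU3 B2 B3 : Type) [Fintype Ω] [Fintype AU2] [Fintype AU3]
        [Fintype B2] [Fintype B3]
        (μ : Ω → ℝ), (∀ ω, 0 ≤ μ ω) → (∑ ω, μ ω) = 1 →
      ∀ (X1 X2 X3 : Ω → Bool) (U2 : Ω → AU2) (U3 : Ω → AU3)
        (Yh2 : Ω → B2) (Yh3 : Ω → B3)
        (p1 : Bool → ℝ) (p2 : AU2 → Bool → ℝ) (p3 : AU3 → Bool → ℝ)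
        (q2 : AU2 → AU3 → Bool → Bool → B2 → ℝ)
        (q3 : AU2 → AU3 → Bool → Bool → B3 → ℝ),
      (∀ x, 0 ≤ p1 x) → (∑ x, p1 x) = 1 →
      (∀ u x, 0 ≤ p2 u x) → (∑ u, ∑ x, p2 u x) = 1 →
      (∀ u x, 0 ≤ p3 u x) → (∑ u, ∑ x, p3 u x) = 1 →
      (∀ u2 u3 x2 y2 yh2, 0 ≤ q2 u2 u3 x2 y2 yh2) →
      (∀ u2 u3 x2 y2, ∑ yh2, q2 u2 u3 x2 y2 yh2 = 1) →
      (∀ u2 u3 x3 y3 yh3, 0 ≤ q3 u2 u3 x3 y3 yh3) →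
      (∀ u2 u3 x3 y3, ∑ yh3, q3 u2 u3 x3 y3 yh3 = 1) →
      (∀ x1 u2 x2 u3 x3 yh2 yh3,
        prob μ (fun ω => (X1 ω, U2 ω, X2 ω, U3 ω, X3 ω, Yh2 ω, Yh3 ω))
            (x1, u2, x2, u3, x3, yh2, yh3)
          = p1 x1 * p2 u2 x2 * p3 u3 x3 * q2 u2 u3 x2 x1 yh2 * q3 u2 u3 x3 x2 yh3) →
      -- the KGG hybrid constraint for 𝒯 = {2}, r(1) = 4 (with Y₂ = X₁, Y₄ = X₃):
      condMI μ Yh2 X1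
          (fun ω => (U2 ω, U3 ω, X2 ω, X3 ω, Yh3 ω, X3 ω))
        + condMI μ Yh2 X3 (fun ω => (U2 ω, U3 ω, X2 ω))
        ≤ condMI μ X2 X3 (fun ω => (U2 ω, U3 ω, X3 ω))
          + condMI μ U2 X3 U3 →
      -- then the hybrid achievable rate vanishes:
      condMI μ X1 (fun ω => (Yh2 ω, Yh3 ω, X3 ω))
          (fun ω => (U2 ω, U3 ω, X2 ω, X3 ω)) = 0) := by
  constructor
  · apply le_antisymm
    · exact csSup_le ⟨1, NNCproof.achievable_one⟩ fun R hR => NNCproof.rate_le_one R hR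
    · exact le_csSup ⟨1, fun R hR => NNCproof.rate_le_one R hR⟩ NNCproof.achievable_one
  · intro Ω AU2 AU3 B2 B3 _ _ _ _ _ μ hμ hμ1 X1 X2 X3 U2 U3 Yh2 Yh3 p1 p2 p3 q2 q3
      hp1 hp1s hp2 hp2s hp3 hp3s hq2 hq2s hq3 hq3s hfact hcons
    clear hp1 hp2 hp3 hq2 hq3
    -- ===== marginals of the joint distribution =====
    have R7 : ∀ yh2 x1 u2 x2 u3 x3 yh3,
        prob μ (fun ω => (Yh2 ω, X1 ω, U2 ω, X2 ω, U3 ω, X3 ω, Yh3 ω))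
          (yh2, x1, u2, x2, u3, x3, yh3)
        = p1 x1 * p2 u2 x2 * p3 u3 x3 * q2 u2 u3 x2 x1 yh2 * q3 u2 u3 x3 x2 yh3 := by
      intro yh2 x1 u2 x2 u3 x3 yh3
      have h := NNCproof.prob_comp_inj μ (fun ω => (X1 ω, U2 ω, X2 ω, U3 ω, X3 ω, Yh2 ω, Yh3 ω))
        (fun t => (t.2.2.2.2.2.1, t.1, t.2.1, t.2.2.1, t.2.2.2.1, t.2.2.2.2.1, t.2.2.2.2.2.2))
        (by intro a b hab; simp only [Prod.mk.injEq] at hab; simp only [Prod.ext_iff]; tauto)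
        (x1, u2, x2, u3, x3, yh2, yh3)
      exact h.trans (hfact x1 u2 x2 u3 x3 yh2 yh3)
    have F6 : ∀ x1 u2 x2 u3 x3 yh3,
        prob μ (fun ω => (X1 ω, U2 ω, X2 ω, U3 ω, X3 ω, Yh3 ω)) (x1, u2, x2, u3, x3, yh3)
        = p1 x1 * p2 u2 x2 * p3 u3 x3 * q3 u2 u3 x3 x2 yh3 := by
      intro x1 u2 x2 u3 x3 yh3
      rw [NNCproof.prob_snd μ Yh2 (fun ω => (X1 ω, U2 ω, X2 ω, U3 ω, X3 ω, Yh3 ω))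
        (x1, u2, x2, u3, x3, yh3)]
      simp only [R7]
      have h : ∀ yh2 : B2, p1 x1 * p2 u2 x2 * p3 u3 x3 * q2 u2 u3 x2 x1 yh2 * q3 u2 u3 x3 x2 yh3
          = q2 u2 u3 x2 x1 yh2 * (p1 x1 * p2 u2 x2 * p3 u3 x3 * q3 u2 u3 x3 x2 yh3) := by
        intro yh2; ring
      rw [Finset.sum_congr rfl fun yh2 _ => h yh2, ← Finset.sum_mul, hq2s, one_mul]
    have R6 : ∀ yh3 x1 u2 x2 u3 x3,
        prob μ (fun ω => (Yh3 ω, X1 ω, U2 ω, X2 ω, U3 ω, X3 ω)) (yh3, x1, u2, x2, u3, x3)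
        = p1 x1 * p2 u2 x2 * p3 u3 x3 * q3 u2 u3 x3 x2 yh3 := by
      intro yh3 x1 u2 x2 u3 x3
      have h := NNCproof.prob_comp_inj μ (fun ω => (X1 ω, U2 ω, X2 ω, U3 ω, X3 ω, Yh3 ω))
        (fun t => (t.2.2.2.2.2, t.1, t.2.1, t.2.2.1, t.2.2.2.1, t.2.2.2.2.1))
        (by intro a b hab; simp only [Prod.mk.injEq] at hab; simp only [Prod.ext_iff]; tauto)
        (x1, u2, x2, u3, x3, yh3)
      exact h.trans (F6 x1 u2 x2 u3 x3 yh3)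
    have F5 : ∀ x1 u2 x2 u3 x3,
        prob μ (fun ω => (X1 ω, U2 ω, X2 ω, U3 ω, X3 ω)) (x1, u2, x2, u3, x3)
        = p1 x1 * p2 u2 x2 * p3 u3 x3 := by
      intro x1 u2 x2 u3 x3
      rw [NNCproof.prob_snd μ Yh3 (fun ω => (X1 ω, U2 ω, X2 ω, U3 ω, X3 ω))
        (x1, u2, x2, u3, x3)]
      simp only [R6]
      rw [← Finset.mul_sum, hq3s, mul_one]
    have M3 : ∀ x1 u2 u3 x2 x3,
        prob μ (fun ω => (X1 ω, U2 ω, U3 ω, X2 ω, X3 ω)) (x1, u2, u3, x2, x3)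
        = p1 x1 * (p2 u2 x2 * p3 u3 x3) := by
      intro x1 u2 u3 x2 x3
      have h := NNCproof.prob_comp_inj μ (fun ω => (X1 ω, U2 ω, X2 ω, U3 ω, X3 ω))
        (fun t => (t.1, t.2.1, t.2.2.2.1, t.2.2.1, t.2.2.2.2))
        (by intro a b hab; simp only [Prod.mk.injEq] at hab; simp only [Prod.ext_iff]; tauto)
        (x1, u2, x2, u3, x3)
      exact h.trans ((F5 x1 u2 x2 u3 x3).trans (by ring))
    have M2 : ∀ u2 u3 x2 x3,
        prob μ (fun ω => (U2 ω, U3 ω, X2 ω, X3 ω)) (u2, u3, x2, x3)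
        = p2 u2 x2 * p3 u3 x3 := by
      intro u2 u3 x2 x3
      rw [NNCproof.prob_snd μ X1 (fun ω => (U2 ω, U3 ω, X2 ω, X3 ω)) (u2, u3, x2, x3)]
      simp only [M3]
      rw [← Finset.sum_mul, hp1s, one_mul]
    have M1 : ∀ x1, prob μ X1 x1 = p1 x1 := by
      intro x1
      rw [NNCproof.prob_fst μ X1 (fun ω => (U2 ω, U3 ω, X2 ω, X3 ω)) x1]
      simp only [Fintype.sum_prod_type, M3]
      simp only [← Finset.mul_sum]
      have h : (∑ u2 : AU2, ∑ u3 : AU3, ∑ x2 : Bool, p2 u2 x2 * ∑ x3 : Bool, p3 u3 x3) = 1 := by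
        have h1 : ∀ u2 : AU2, (∑ u3 : AU3, ∑ x2 : Bool, p2 u2 x2 * ∑ x3 : Bool, p3 u3 x3)
            = ∑ x2, p2 u2 x2 := by
          intro u2
          have h2 : ∀ u3 : AU3, (∑ x2 : Bool, p2 u2 x2 * ∑ x3 : Bool, p3 u3 x3)
              = (∑ x2, p2 u2 x2) * (∑ x3, p3 u3 x3) := fun u3 => by rw [← Finset.sum_mul]
          simp only [h2]
          rw [← Finset.mul_sum, hp3s, mul_one]
        simp only [h1]
        exact hp2s
      rw [h, mul_one]
    have M5 : ∀ x1 u2 u3 x2 x3 yh3,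
        prob μ (fun ω => (X1 ω, U2 ω, U3 ω, X2 ω, X3 ω, Yh3 ω)) (x1, u2, u3, x2, x3, yh3)
        = p1 x1 * (p2 u2 x2 * p3 u3 x3 * q3 u2 u3 x3 x2 yh3) := by
      intro x1 u2 u3 x2 x3 yh3
      have h := NNCproof.prob_comp_inj μ (fun ω => (X1 ω, U2 ω, X2 ω, U3 ω, X3 ω, Yh3 ω))
        (fun t => (t.1, t.2.1, t.2.2.2.1, t.2.2.1, t.2.2.2.2.1, t.2.2.2.2.2))
        (by intro a b hab; simp only [Prod.mk.injEq] at hab; simp only [Prod.ext_iff]; tauto)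
        (x1, u2, x2, u3, x3, yh3)
      exact h.trans ((F6 x1 u2 x2 u3 x3 yh3).trans (by ring))
    have M4 : ∀ u2 u3 x2 x3 yh3,
        prob μ (fun ω => (U2 ω, U3 ω, X2 ω, X3 ω, Yh3 ω)) (u2, u3, x2, x3, yh3)
        = p2 u2 x2 * p3 u3 x3 * q3 u2 u3 x3 x2 yh3 := by
      intro u2 u3 x2 x3 yh3
      rw [NNCproof.prob_snd μ X1 (fun ω => (U2 ω, U3 ω, X2 ω, X3 ω, Yh3 ω))
        (u2, u3, x2, x3, yh3)]
      simp only [M5]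
      rw [← Finset.sum_mul, hp1s, one_mul]
    have RM2 : ∀ x2 x3 u2 u3,
        prob μ (fun ω => (X2 ω, X3 ω, U2 ω, U3 ω)) (x2, x3, u2, u3)
        = p2 u2 x2 * p3 u3 x3 := by
      intro x2 x3 u2 u3
      have h := NNCproof.prob_comp_inj μ (fun ω => (U2 ω, U3 ω, X2 ω, X3 ω))
        (fun t => (t.2.2.1, t.2.2.2, t.1, t.2.1))
        (by intro a b hab; simp only [Prod.mk.injEq] at hab; simp only [Prod.ext_iff]; tauto)
        (u2, u3, x2, x3)
      exact h.trans (M2 u2 u3 x2 x3)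
    have G3 : ∀ x3 u2 u3,
        prob μ (fun ω => (X3 ω, U2 ω, U3 ω)) (x3, u2, u3)
        = (∑ x2, p2 u2 x2) * p3 u3 x3 := by
      intro x3 u2 u3
      rw [NNCproof.prob_snd μ X2 (fun ω => (X3 ω, U2 ω, U3 ω)) (x3, u2, u3)]
      simp only [RM2]
      rw [← Finset.sum_mul]
    have M10 : ∀ u2 x3 u3,
        prob μ (fun ω => (U2 ω, X3 ω, U3 ω)) (u2, x3, u3)
        = (∑ x2, p2 u2 x2) * p3 u3 x3 := by
      intro u2 x3 u3
      have h := NNCproof.prob_comp_inj μ (fun ω => (X3 ω, U2 ω, U3 ω))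
        (fun t => (t.2.1, t.1, t.2.2))
        (by intro a b hab; simp only [Prod.mk.injEq] at hab; simp only [Prod.ext_iff]; tauto)
        (x3, u2, u3)
      exact h.trans (G3 x3 u2 u3)
    have M9 : ∀ x3 u3, prob μ (fun ω => (X3 ω, U3 ω)) (x3, u3) = p3 u3 x3 := by
      intro x3 u3
      rw [NNCproof.prob_snd μ U2 (fun ω => (X3 ω, U3 ω)) (x3, u3)]
      simp only [M10]
      rw [← Finset.sum_mul, hp2s, one_mul]
    have M8 : ∀ u2 u3, prob μ (fun ω => (U2 ω, U3 ω)) (u2, u3)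
        = (∑ x2, p2 u2 x2) * (∑ x3, p3 u3 x3) := by
      intro u2 u3
      rw [NNCproof.prob_snd μ X3 (fun ω => (U2 ω, U3 ω)) (u2, u3)]
      simp only [G3]
      rw [← Finset.mul_sum]
    have M7 : ∀ u3, prob μ U3 u3 = ∑ x3, p3 u3 x3 := by
      intro u3
      rw [NNCproof.prob_snd μ U2 U3 u3]
      simp only [M8]
      rw [← Finset.sum_mul, hp2s, one_mul]
    have M6 : ∀ u2, prob μ U2 u2 = ∑ x2, p2 u2 x2 := by
      intro u2
      rw [NNCproof.prob_fst μ U2 U3 u2]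
      simp only [M8]
      rw [← Finset.mul_sum, hp3s, mul_one]
    -- ===== independence facts for entropies =====
    have hiXZ : ent μ (fun ω => (X1 ω, U2 ω, U3 ω, X2 ω, X3 ω))
        = ent μ X1 + ent μ (fun ω => (U2 ω, U3 ω, X2 ω, X3 ω)) :=
      NNCproof.ent_pair_of_indep μ X1 (fun ω => (U2 ω, U3 ω, X2 ω, X3 ω)) hμ1
        (fun a b => by
          obtain ⟨u2, u3, x2, x3⟩ := b
          show prob μ (fun ω => (X1 ω, U2 ω, U3 ω, X2 ω, X3 ω)) (a, u2, u3, x2, x3)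
            = prob μ X1 a * prob μ (fun ω => (U2 ω, U3 ω, X2 ω, X3 ω)) (u2, u3, x2, x3)
          rw [M3, M1, M2])
    have hiXS : ent μ (fun ω => (X1 ω, U2 ω, U3 ω, X2 ω, X3 ω, Yh3 ω))
        = ent μ X1 + ent μ (fun ω => (U2 ω, U3 ω, X2 ω, X3 ω, Yh3 ω)) :=
      NNCproof.ent_pair_of_indep μ X1 (fun ω => (U2 ω, U3 ω, X2 ω, X3 ω, Yh3 ω)) hμ1
        (fun a b => by
          obtain ⟨u2, u3, x2, x3, yh3⟩ := b
          show prob μ (fun ω => (X1 ω, U2 ω, U3 ω, X2 ω, X3 ω, Yh3 ω)) (a, u2, u3, x2, x3, yh3)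
            = prob μ X1 a * prob μ (fun ω => (U2 ω, U3 ω, X2 ω, X3 ω, Yh3 ω)) (u2, u3, x2, x3, yh3)
          rw [M5, M1, M4])
    have hiU2U3 : ent μ (fun ω => (U2 ω, U3 ω)) = ent μ U2 + ent μ U3 :=
      NNCproof.ent_pair_of_indep μ U2 U3 hμ1
        (fun a b => by
          show prob μ (fun ω => (U2 ω, U3 ω)) (a, b) = prob μ U2 a * prob μ U3 b
          rw [M8, M6, M7])
    have hiU2X3U3 : ent μ (fun ω => (U2 ω, X3 ω, U3 ω))
        = ent μ U2 + ent μ (fun ω => (X3 ω, U3 ω)) :=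
      NNCproof.ent_pair_of_indep μ U2 (fun ω => (X3 ω, U3 ω)) hμ1
        (fun a b => by
          obtain ⟨x3, u3⟩ := b
          show prob μ (fun ω => (U2 ω, X3 ω, U3 ω)) (a, x3, u3)
            = prob μ U2 a * prob μ (fun ω => (X3 ω, U3 ω)) (x3, u3)
          rw [M10, M6, M9])
    -- ===== entropy recodings (injective relabelings) =====
    have hA : ent μ (fun ω => (Yh2 ω, U2 ω, U3 ω, X2 ω, X3 ω, Yh3 ω, X3 ω))
        = ent μ (fun ω => (Yh2 ω, U2 ω, U3 ω, X2 ω, X3 ω, Yh3 ω)) :=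
      NNCproof.ent_comp_inj μ (fun ω => (Yh2 ω, U2 ω, U3 ω, X2 ω, X3 ω, Yh3 ω))
        (fun t => (t.1, t.2.1, t.2.2.1, t.2.2.2.1, t.2.2.2.2.1, t.2.2.2.2.2, t.2.2.2.2.1))
        (by intro a b hab; simp only [Prod.mk.injEq] at hab; simp only [Prod.ext_iff]; tauto)
    have hB : ent μ (fun ω => (X1 ω, U2 ω, U3 ω, X2 ω, X3 ω, Yh3 ω, X3 ω))
        = ent μ (fun ω => (X1 ω, U2 ω, U3 ω, X2 ω, X3 ω, Yh3 ω)) :=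
      NNCproof.ent_comp_inj μ (fun ω => (X1 ω, U2 ω, U3 ω, X2 ω, X3 ω, Yh3 ω))
        (fun t => (t.1, t.2.1, t.2.2.1, t.2.2.2.1, t.2.2.2.2.1, t.2.2.2.2.2, t.2.2.2.2.1))
        (by intro a b hab; simp only [Prod.mk.injEq] at hab; simp only [Prod.ext_iff]; tauto)
    have hC : ent μ (fun ω => (Yh2 ω, X1 ω, U2 ω, U3 ω, X2 ω, X3 ω, Yh3 ω, X3 ω))
        = ent μ (fun ω => (X1 ω, Yh2 ω, U2 ω, U3 ω, X2 ω, X3 ω, Yh3 ω)) :=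
      NNCproof.ent_comp_inj μ (fun ω => (X1 ω, Yh2 ω, U2 ω, U3 ω, X2 ω, X3 ω, Yh3 ω))
        (fun t => (t.2.1, t.1, t.2.2.1, t.2.2.2.1, t.2.2.2.2.1, t.2.2.2.2.2.1,
          t.2.2.2.2.2.2, t.2.2.2.2.2.1))
        (by intro a b hab; simp only [Prod.mk.injEq] at hab; simp only [Prod.ext_iff]; tauto)
    have hD : ent μ (fun ω => (U2 ω, U3 ω, X2 ω, X3 ω, Yh3 ω, X3 ω))
        = ent μ (fun ω => (U2 ω, U3 ω, X2 ω, X3 ω, Yh3 ω)) :=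
      NNCproof.ent_comp_inj μ (fun ω => (U2 ω, U3 ω, X2 ω, X3 ω, Yh3 ω))
        (fun t => (t.1, t.2.1, t.2.2.1, t.2.2.2.1, t.2.2.2.2, t.2.2.2.1))
        (by intro a b hab; simp only [Prod.mk.injEq] at hab; simp only [Prod.ext_iff]; tauto)
    have hOB : ent μ (fun ω => ((Yh2 ω, Yh3 ω, X3 ω), U2 ω, U3 ω, X2 ω, X3 ω))
        = ent μ (fun ω => (Yh2 ω, U2 ω, U3 ω, X2 ω, X3 ω, Yh3 ω)) :=
      NNCproof.ent_comp_inj μ (fun ω => (Yh2 ω, U2 ω, U3 ω, X2 ω, X3 ω, Yh3 ω))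
        (fun t => ((t.1, t.2.2.2.2.2, t.2.2.2.2.1), t.2.1, t.2.2.1, t.2.2.2.1, t.2.2.2.2.1))
        (by intro a b hab; simp only [Prod.mk.injEq] at hab; simp only [Prod.ext_iff]; tauto)
    have hOC : ent μ (fun ω => (X1 ω, (Yh2 ω, Yh3 ω, X3 ω), U2 ω, U3 ω, X2 ω, X3 ω))
        = ent μ (fun ω => (X1 ω, Yh2 ω, U2 ω, U3 ω, X2 ω, X3 ω, Yh3 ω)) :=
      NNCproof.ent_comp_inj μ (fun ω => (X1 ω, Yh2 ω, U2 ω, U3 ω, X2 ω, X3 ω, Yh3 ω))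
        (fun t => (t.1, (t.2.1, t.2.2.2.2.2.2, t.2.2.2.2.2.1), t.2.2.1, t.2.2.2.1,
          t.2.2.2.2.1, t.2.2.2.2.2.1))
        (by intro a b hab; simp only [Prod.mk.injEq] at hab; simp only [Prod.ext_iff]; tauto)
    have hR1a : ent μ (fun ω => (X3 ω, U2 ω, U3 ω, X3 ω))
        = ent μ (fun ω => (U2 ω, U3 ω, X3 ω)) :=
      NNCproof.ent_comp_inj μ (fun ω => (U2 ω, U3 ω, X3 ω))
        (fun t => (t.2.2, t.1, t.2.1, t.2.2))
        (by intro a b hab; simp only [Prod.mk.injEq] at hab; simp only [Prod.ext_iff]; tauto)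
    have hR1b : ent μ (fun ω => (X2 ω, X3 ω, U2 ω, U3 ω, X3 ω))
        = ent μ (fun ω => (X2 ω, U2 ω, U3 ω, X3 ω)) :=
      NNCproof.ent_comp_inj μ (fun ω => (X2 ω, U2 ω, U3 ω, X3 ω))
        (fun t => (t.1, t.2.2.2, t.2.1, t.2.2.1, t.2.2.2))
        (by intro a b hab; simp only [Prod.mk.injEq] at hab; simp only [Prod.ext_iff]; tauto)
    -- ===== nonnegativity of the two left-hand terms =====
    have n1 : 0 ≤ condMI μ Yh2 X1 (fun ω => (U2 ω, U3 ω, X2 ω, X3 ω, Yh3 ω, X3 ω)) :=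
      NNCproof.condMI_nonneg μ hμ hμ1 _ _ _
    have n2 : 0 ≤ condMI μ Yh2 X3 (fun ω => (U2 ω, U3 ω, X2 ω)) :=
      NNCproof.condMI_nonneg μ hμ hμ1 _ _ _
    simp only [condMI] at hcons n1 n2 ⊢
    linarith [hA, hB, hC, hD, hOB, hOC, hR1a, hR1b, hiXZ, hiXS, hiU2U3, hiU2X3U3]
end
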